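/- arXiv:1208.3540 — 4 statements merged into one kernel-verified Lean document; each statement's English description precedes it below -/
import Mathlib

section
/- Fix an integer j ≥ 2. Define two permutations u, v in the symmetric group S_n (regarded as words a_1 a_2 ⋯ a_n in one-line notation) to be j-equivalent if v can be obtained from u by a sequence of interchanges of adjacent entries whose values differ by at least j. Then the number f_j(n) of equivalence classes of this equivalence relation equals n! if n ≤ j, and equals j!·j^{n−j} if n > j. -/
/-!
The code of a word `w` at a value `m` is the number of letters of the window `m - j < a < m` that
stand to the left of `m` in `w`. A move only swaps letters at distance at least `j`, so it never
changes the relative order of `m` and a letter of its window: these numbers are invariant.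
Conversely, they determine the relative order of every pair of letters at distance less than `j`
(by induction on the larger letter), and two permutations that agree on all these relative orders
are connected by moves (bring the first letter of one to the front of the other). Hence the
classes are in bijection with the code words, and inserting `n + 1` into a word of `Sₙ` shows
that the code at `m` takes each value below `min m j` independently: there are `∏ₘ min m j`
classes.
-/

/-- One interchange of two adjacent entries of a word whose values differ by at least `j`. -/
def AdjSwapGe (j : ℕ) (u v : List ℕ) : Prop :=
  ∃ (p q : List ℕ) (x y : ℕ), j ≤ ((x : ℤ) - (y : ℤ)).natAbs ∧
    u = p ++ x :: y :: q ∧ v = p ++ y :: x :: q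

/-- The number of equivalence classes, under the equivalence relation generated by `r`,
of words belonging to an `r`-closed set `W` of words. -/
noncomputable def numClasses (r : List ℕ → List ℕ → Prop) (W : Set (List ℕ)) : ℕ :=
  Set.ncard {C : Set (List ℕ) | ∃ w ∈ W, C = {v | Relation.EqvGen r w v}}

lemma List.exists_append_countP_eq {α : Type*} (P : α → Bool) :
    ∀ (l : List α) {k : ℕ}, k ≤ l.countP P → ∃ p q, p ++ q = l ∧ p.countP P = k
  | [], _, hk => ⟨[], [], rfl, by simp at hk; simp [hk]⟩
  | a :: l, 0, _ => ⟨[], a :: l, rfl, rfl⟩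
  | a :: l, k + 1, hk => by
    by_cases ha : P a
    · obtain ⟨p, q, rfl, hp⟩ :=
        exists_append_countP_eq P l (k := k) (by simp [ha] at hk; omega)
      exact ⟨a :: p, q, rfl, by simp [ha, hp]⟩
    · obtain ⟨p, q, rfl, hp⟩ :=
        exists_append_countP_eq P l (k := k + 1) (by simpa [ha] using hk)
      exact ⟨a :: p, q, rfl, by simp [ha, hp]⟩

lemma Finset.eq_of_downward_closed_of_card_eq {α : Type*} {r : α → α → Prop}
    {A S T : Finset α} (hS : S ⊆ A) (hT : T ⊆ A)
    (htotal : ∀ a ∈ A, ∀ b ∈ A, a ≠ b → r a b ∨ r b a)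
    (hS_closed : ∀ a ∈ S, ∀ b ∈ A, r b a → b ∈ S)
    (hT_closed : ∀ a ∈ T, ∀ b ∈ A, r b a → b ∈ T) (hcard : S.card = T.card) :
    S = T := by
  by_contra hne
  obtain ⟨a, haS, haT⟩ := Finset.not_subset.mp fun h =>
    hne (Finset.eq_of_subset_of_card_le h hcard.ge)
  obtain ⟨b, hbT, hbS⟩ := Finset.not_subset.mp fun h =>
    hne (Finset.eq_of_subset_of_card_le h hcard.le).symm
  rcases htotal a (hS haS) b (hT hbT) (by rintro rfl; exact haT hbT) with h | h
  exacts [haT (hT_closed b hbT a (hS haS) h), hbS (hS_closed a haS b (hT hbT) h)]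

lemma Set.ncard_image_eq_ncard_image_of_iff {α β γ : Type*} {A : Set α} {f : α → β}
    {g : α → γ} (h : ∀ a ∈ A, ∀ b ∈ A, f a = f b ↔ g a = g b) :
    (f '' A).ncard = (g '' A).ncard := by
  refine Set.ncard_congr (fun _ hb => g hb.choose) (fun _ hb => ⟨_, hb.choose_spec.1, rfl⟩)
    ?_ ?_
  · intro b b' hb hb' hg
    rw [← hb.choose_spec.2, ← hb'.choose_spec.2]
    exact (h _ hb.choose_spec.1 _ hb'.choose_spec.1).mpr hg
  · rintro _ ⟨a, ha, rfl⟩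
    have hfa : f a ∈ f '' A := ⟨a, ha, rfl⟩
    exact ⟨f a, hfa, (h _ hfa.choose_spec.1 a ha).mp hfa.choose_spec.2⟩

lemma Relation.setOf_eqvGen_eq_iff {α : Type*} {r : α → α → Prop} {a b : α} :
    {x | Relation.EqvGen r a x} = {x | Relation.EqvGen r b x} ↔ Relation.EqvGen r a b :=
  ⟨fun h => (Set.ext_iff.mp h b).mpr (.refl b), fun h => Set.ext fun _ =>
    ⟨fun hx => .trans _ _ _ (.symm _ _ h) hx, fun hx => .trans _ _ _ h hx⟩⟩

namespace JEquivalence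

section Precedes

variable {α : Type*} {w p q : List α} {a b c x y : α}

def Precedes (w : List α) (a b : α) : Prop := [a, b].Sublist w

instance [DecidableEq α] : DecidableRel (Precedes w) :=
  fun a b => inferInstanceAs (Decidable ([a, b].Sublist w))

lemma Precedes.mem_left (h : Precedes w a b) : a ∈ w := h.subset (by simp)

lemma Precedes.mem_right (h : Precedes w a b) : b ∈ w := h.subset (by simp)

lemma precedes_cons_iff : Precedes (c :: w) a b ↔ (a = c ∧ b ∈ w) ∨ Precedes w a b := by
  simp [Precedes, List.sublist_cons_iff, or_comm]

lemma precedes_append_iff :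
    Precedes (p ++ q) a b ↔ Precedes p a b ∨ (a ∈ p ∧ b ∈ q) ∨ Precedes q a b := by
  induction p with
  | nil => simp [Precedes]
  | cons c p ih =>
    simp only [List.cons_append, precedes_cons_iff, ih, List.mem_append, List.mem_cons]
    tauto

lemma precedes_middle_iff (ha : a ≠ c) (hb : b ≠ c) :
    Precedes (p ++ c :: q) a b ↔ Precedes (p ++ q) a b := by
  simp only [precedes_append_iff, precedes_cons_iff, List.mem_cons]
  tauto

lemma precedes_middle_self_iff (hw : (p ++ c :: q).Nodup) :
    Precedes (p ++ c :: q) a c ↔ a ∈ p := by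
  have hc : c ∉ p ++ q := (List.nodup_cons.mp (List.nodup_middle.mp hw)).1
  rw [List.mem_append, not_or] at hc
  simp only [precedes_append_iff, precedes_cons_iff]
  refine ⟨?_, fun ha => Or.inr (Or.inl ⟨ha, List.mem_cons_self⟩)⟩
  rintro (h | ⟨ha, -⟩ | ⟨-, h⟩ | h)
  exacts [absurd h.mem_right hc.1, ha, absurd h hc.2, absurd h.mem_right hc.2]

lemma precedes_swap_iff (h₁ : ¬(a = x ∧ b = y)) (h₂ : ¬(a = y ∧ b = x)) :
    Precedes (p ++ x :: y :: q) a b ↔ Precedes (p ++ y :: x :: q) a b := by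
  simp only [precedes_append_iff, precedes_cons_iff, List.mem_cons]
  tauto

lemma Precedes.asymm (hw : w.Nodup) (hab : Precedes w a b) (hba : Precedes w b a) : False := by
  induction w with
  | nil => simp [Precedes] at hab
  | cons c w ih =>
    rw [List.nodup_cons] at hw
    rw [precedes_cons_iff] at hab hba
    rcases hab with ⟨rfl, hb⟩ | hab <;> rcases hba with ⟨rfl, ha⟩ | hba
    exacts [hw.1 hb, hw.1 hba.mem_right, hw.1 hab.mem_right, ih hw.2 hab hba]

lemma Precedes.irrefl (hw : w.Nodup) (h : Precedes w a a) : False := h.asymm hw h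

lemma Precedes.trans (hw : w.Nodup) (hab : Precedes w a b) (hbc : Precedes w b c) :
    Precedes w a c := by
  induction w with
  | nil => simp [Precedes] at hab
  | cons d w ih =>
    rw [List.nodup_cons] at hw
    rw [precedes_cons_iff] at hab hbc ⊢
    rcases hab with ⟨rfl, hb⟩ | hab <;> rcases hbc with ⟨rfl, hc⟩ | hbc
    exacts [absurd hb hw.1, Or.inl ⟨rfl, hbc.mem_right⟩, absurd hab.mem_right hw.1,
      Or.inr (ih hw.2 hab hbc)]

lemma precedes_or_precedes (ha : a ∈ w) (hb : b ∈ w) (hab : a ≠ b) :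
    Precedes w a b ∨ Precedes w b a := by
  induction w with
  | nil => simp at ha
  | cons c w ih =>
    simp only [precedes_cons_iff]
    rw [List.mem_cons] at ha hb
    rcases ha with rfl | ha <;> rcases hb with rfl | hb
    · exact absurd rfl hab
    · exact Or.inl (Or.inl ⟨rfl, hb⟩)
    · exact Or.inr (Or.inl ⟨rfl, ha⟩)
    · exact (ih ha hb).imp Or.inr Or.inr

lemma precedes_iff_not_precedes (hw : w.Nodup) (ha : a ∈ w) (hb : b ∈ w) (hab : a ≠ b) :
    Precedes w a b ↔ ¬ Precedes w b a :=
  ⟨fun h h' => h.asymm hw h', fun h => (precedes_or_precedes ha hb hab).resolve_right h⟩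

end Precedes

abbrev InWindow (j m a : ℕ) : Prop := a < m ∧ m < a + j

def code (j : ℕ) (w : List ℕ) (m : ℕ) : ℕ :=
  ((w.toFinset.filter (InWindow j m)).filter (Precedes w · m)).card

section Code

variable {j m c x y : ℕ} {u v p q : List ℕ}

lemma code_swap (hxy : j ≤ ((x : ℤ) - y).natAbs) :
    code j (p ++ x :: y :: q) m = code j (p ++ y :: x :: q) m := by
  unfold code
  rw [List.toFinset_eq_of_perm _ _ ((List.Perm.swap y x q).append_left p)]
  congr 1
  refine Finset.filter_congr fun a ha => precedes_swap_iff ?_ ?_ <;>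
  · rw [Finset.mem_filter] at ha
    rintro ⟨rfl, rfl⟩
    omega

lemma code_eq_of_adjSwapGe (h : AdjSwapGe j u v) : code j u = code j v := by
  obtain ⟨p, q, x, y, hxy, rfl, rfl⟩ := h
  exact funext fun _ => code_swap hxy

lemma code_eq_of_eqvGen (h : Relation.EqvGen (AdjSwapGe j) u v) : code j u = code j v :=
  congrArg (Quot.lift (code j) fun _ _ => code_eq_of_adjSwapGe) (Quot.eqvGen_sound h)

lemma code_middle_of_lt (hm : m < c) : code j (p ++ c :: q) m = code j (p ++ q) m := by
  unfold code
  have hwin : (p ++ c :: q).toFinset.filter (InWindow j m) =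
      (p ++ q).toFinset.filter (InWindow j m) := by
    ext a
    simp only [Finset.mem_filter, List.mem_toFinset, List.mem_append, List.mem_cons]
    constructor
    · rintro ⟨ha | rfl | ha, hwin⟩
      exacts [⟨Or.inl ha, hwin⟩, absurd hwin.1 (by omega), ⟨Or.inr ha, hwin⟩]
    · tauto
  rw [hwin]
  congr 1
  refine Finset.filter_congr fun a ha => precedes_middle_iff ?_ hm.ne
  rw [Finset.mem_filter] at ha
  omega

lemma code_middle_self (hw : (p ++ c :: q).Nodup) :
    code j (p ++ c :: q) c = p.countP (InWindow j c ·) := by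
  unfold code
  rw [Finset.filter_filter, List.countP_eq_length_filter,
    ← List.toFinset_card_of_nodup ((List.nodup_append.mp hw).1.filter _)]
  congr 1
  ext a
  simp only [Finset.mem_filter, List.mem_toFinset, List.mem_filter, precedes_middle_self_iff hw,
    List.mem_append, List.mem_cons, decide_eq_true_eq]
  tauto

end Code

section Order

variable {j : ℕ} {u v p q : List ℕ}

lemma filter_precedes_eq_of_card_eq (hp : u.Perm v) (hu : u.Nodup) {A : Finset ℕ} {y : ℕ}
    (hAu : ∀ a ∈ A, a ∈ u)
    (horder : ∀ a ∈ A, ∀ b ∈ A, Precedes u a b → Precedes v a b)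
    (hcard : (A.filter (Precedes u · y)).card = (A.filter (Precedes v · y)).card) :
    A.filter (Precedes u · y) = A.filter (Precedes v · y) := by
  refine Finset.eq_of_downward_closed_of_card_eq (r := Precedes u)
    (Finset.filter_subset _ A) (Finset.filter_subset _ A)
    (fun a ha b hb hab => precedes_or_precedes (hAu a ha) (hAu b hb) hab) ?_ ?_ hcard
  · intro a ha b hb hba
    rw [Finset.mem_filter] at ha ⊢
    exact ⟨hb, hba.trans hu ha.2⟩
  · intro a ha b hb hba
    rw [Finset.mem_filter] at ha ⊢
    exact ⟨hb, (horder b hb a ha.1 hba).trans (hp.nodup_iff.mp hu) ha.2⟩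

/-- Induction on `y`: `u` and `v` order the window of `y` alike (its pairs have smaller top
letters), and in each word the window letters preceding `y` form an initial segment of that order,
whose length is the code of `y`. -/
lemma precedes_iff_of_code_eq (hp : u.Perm v) (hu : u.Nodup)
    (hcode : ∀ m ∈ u, code j u m = code j v m) {x y : ℕ} (hxy : x < y) (hyx : y < x + j) :
    Precedes u x y ↔ Precedes v x y := by
  have hv : v.Nodup := hp.nodup_iff.mp hu
  induction y using Nat.strong_induction_on generalizing x with
  | _ y ih =>
    by_cases hmem : x ∈ u ∧ y ∈ u
    swap
    · exact ⟨fun h => absurd ⟨h.mem_left, h.mem_right⟩ hmem,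
        fun h => absurd ⟨hp.mem_iff.mpr h.mem_left, hp.mem_iff.mpr h.mem_right⟩ hmem⟩
    set A := u.toFinset.filter (InWindow j y)
    have hA : ∀ a ∈ A, ∀ b ∈ A, Precedes u a b ↔ Precedes v a b := by
      intro a ha b hb
      simp only [A, Finset.mem_filter, List.mem_toFinset] at ha hb
      rcases lt_trichotomy a b with hab | rfl | hba
      · exact ih b hb.2.1 hab (by omega)
      · exact ⟨fun h => (h.irrefl hu).elim, fun h => (h.irrefl hv).elim⟩
      · rw [precedes_iff_not_precedes hu ha.1 hb.1 hba.ne',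
          precedes_iff_not_precedes hv (hp.mem_iff.mp ha.1) (hp.mem_iff.mp hb.1) hba.ne']
        exact not_congr (ih a ha.2.1 hba (by omega))
    have hcard : (A.filter (Precedes u · y)).card = (A.filter (Precedes v · y)).card := by
      have := hcode y hmem.2
      rwa [code, code, ← List.toFinset_eq_of_perm _ _ hp] at this
    have hfilter := filter_precedes_eq_of_card_eq hp hu
      (fun a ha => by simp only [A, Finset.mem_filter, List.mem_toFinset] at ha; exact ha.1)
      (fun a ha b hb => (hA a ha b hb).mp) hcard
    have hxA : x ∈ A := by
      simp only [A, Finset.mem_filter, List.mem_toFinset]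
      exact ⟨hmem.1, hxy, hyx⟩
    simpa [hxA] using Finset.ext_iff.mp hfilter x

lemma adjSwapGe_cons (h : AdjSwapGe j u v) (c : ℕ) :
    AdjSwapGe j (c :: u) (c :: v) := by
  obtain ⟨p, q, x, y, hxy, rfl, rfl⟩ := h
  exact ⟨c :: p, q, x, y, hxy, rfl, rfl⟩

lemma eqvGen_cons (h : Relation.EqvGen (AdjSwapGe j) u v) (c : ℕ) :
    Relation.EqvGen (AdjSwapGe j) (c :: u) (c :: v) := by
  induction h with
  | rel _ _ h => exact .rel _ _ (adjSwapGe_cons h c)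
  | refl => exact .refl _
  | symm _ _ _ ih => exact .symm _ _ ih
  | trans _ _ _ _ _ ih₁ ih₂ => exact .trans _ _ _ ih₁ ih₂

lemma eqvGen_middle_to_front {c : ℕ} (hfar : ∀ a ∈ p, j ≤ ((a : ℤ) - c).natAbs) :
    Relation.EqvGen (AdjSwapGe j) (p ++ c :: q) (c :: (p ++ q)) := by
  induction p with
  | nil => exact .refl _
  | cons a p ih =>
    refine .trans _ _ _ (eqvGen_cons (ih fun b hb => hfar b (List.mem_cons_of_mem a hb)) a) ?_
    exact .rel _ _ ⟨[], p ++ q, a, c, hfar a List.mem_cons_self, rfl, rfl⟩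

/-- Bubble the first letter of `v` to the front of `u`: the letters it passes are far from it,
since they come after it in `v`. -/
lemma eqvGen_of_precedes_iff (hp : u.Perm v) (hv : v.Nodup)
    (horder : ∀ x y, x < y → y < x + j → (Precedes u x y ↔ Precedes v x y)) :
    Relation.EqvGen (AdjSwapGe j) u v := by
  induction v generalizing u with
  | nil => rw [hp.eq_nil]; exact .refl _
  | cons c v ih =>
    obtain ⟨p, q, rfl⟩ := List.append_of_mem (hp.mem_iff.mpr List.mem_cons_self)
    have hu : (p ++ c :: q).Nodup := hp.nodup_iff.mpr hv
    have hc : c ∉ v := (List.nodup_cons.mp hv).1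
    have hpq : (p ++ q).Perm v := (List.perm_cons c).mp (List.perm_middle.symm.trans hp)
    have hfar : ∀ a ∈ p, j ≤ ((a : ℤ) - c).natAbs := by
      intro a ha
      have hac : Precedes (p ++ c :: q) a c := (precedes_middle_self_iff hu).mpr ha
      have hne : a ≠ c := by rintro rfl; exact hac.irrefl hu
      have hca : Precedes (c :: v) c a :=
        precedes_cons_iff.mpr (Or.inl ⟨rfl, hpq.mem_iff.mp (List.mem_append_left q ha)⟩)
      by_contra hclose
      rcases hne.lt_or_gt with hlt | hgt
      · exact ((horder a c hlt (by omega)).mp hac).asymm hv hca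
      · exact hac.asymm hu ((horder c a hgt (by omega)).mpr hca)
    refine .trans _ _ _ (eqvGen_middle_to_front hfar)
      (eqvGen_cons (ih hpq (List.nodup_cons.mp hv).2 fun x y hxy hyx => ?_) c)
    by_cases hx : x = c
    · subst hx
      exact ⟨fun h => absurd (hpq.mem_iff.mp h.mem_left) hc, fun h => absurd h.mem_left hc⟩
    by_cases hy : y = c
    · subst hy
      exact ⟨fun h => absurd (hpq.mem_iff.mp h.mem_right) hc, fun h => absurd h.mem_right hc⟩
    rw [← precedes_middle_iff hx hy, horder x y hxy hyx, precedes_cons_iff]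
    simp [hx]

end Order

section Counting

def codeList (j n : ℕ) (w : List ℕ) : List ℕ := (List.range' 1 n).map (code j w)

def codes (j : ℕ) : ℕ → Finset (List ℕ)
  | 0 => {[]}
  | n + 1 => (codes j n ×ˢ Finset.range (min (n + 1) j)).image fun ck => ck.1 ++ [ck.2]

lemma card_codes (j n : ℕ) : (codes j n).card = ∏ i ∈ Finset.range n, min (i + 1) j := by
  induction n with
  | zero => simp [codes]
  | succ n ih =>
    have hinj : Function.Injective fun ck : List ℕ × ℕ => ck.1 ++ [ck.2] := by
      rintro ⟨c, k⟩ ⟨c', k'⟩ h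
      obtain ⟨rfl, h⟩ := List.append_inj' h rfl
      simp_all
    rw [codes, Finset.card_image_of_injective _ hinj, Finset.card_product, Finset.card_range, ih,
      Finset.prod_range_succ]

lemma prod_range_min_succ (j n : ℕ) :
    ∏ i ∈ Finset.range n, min (i + 1) j =
      if n ≤ j then n.factorial else j.factorial * j ^ (n - j) := by
  split_ifs with hn
  · rw [← Finset.prod_range_add_one_eq_factorial]
    exact Finset.prod_congr rfl fun i hi => min_eq_left (by simp at hi; omega)
  · obtain ⟨k, rfl⟩ : ∃ k, n = j + k := ⟨n - j, by omega⟩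
    rw [Finset.prod_range_add, ← Finset.prod_range_add_one_eq_factorial, Nat.add_sub_cancel_left]
    congr 1
    · exact Finset.prod_congr rfl fun i hi => min_eq_left (by simp at hi; omega)
    · rw [Finset.prod_congr rfl fun i _ => min_eq_right (by omega : j ≤ j + i + 1),
        Finset.prod_const, Finset.card_range]

variable {j n : ℕ} {u v p q : List ℕ}

lemma perm_range'_succ_iff :
    (p ++ (n + 1) :: q).Perm (List.range' 1 (n + 1)) ↔ (p ++ q).Perm (List.range' 1 n) := by
  rw [List.range'_1_concat, add_comm 1 n]
  have hmid := List.perm_middle (a := n + 1) (l₁ := p) (l₂ := q)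
  have hlast := List.perm_append_singleton (n + 1) (List.range' 1 n)
  exact ⟨fun h => (List.perm_cons _).mp (hmid.symm.trans (h.trans hlast)),
    fun h => hmid.trans (((List.perm_cons _).mpr h).trans hlast.symm)⟩

lemma codeList_succ :
    codeList j (n + 1) (p ++ (n + 1) :: q) =
      codeList j n (p ++ q) ++ [code j (p ++ (n + 1) :: q) (n + 1)] := by
  rw [codeList, List.range'_1_concat, add_comm 1 n, List.map_append, List.map_singleton, codeList]
  congr 1
  exact List.map_congr_left fun m hm => code_middle_of_lt (by simp at hm; omega)

lemma countP_inWindow_range' (hj : 1 ≤ j) :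
    (List.range' 1 n).countP (InWindow j (n + 1) ·) = min n (j - 1) := by
  rw [List.countP_eq_length_filter,
    ← List.toFinset_card_of_nodup ((List.nodup_range' (s := 1) (n := n)).filter _)]
  have : ((List.range' 1 n).filter (InWindow j (n + 1) ·)).toFinset =
      Finset.Icc (max 1 (n + 2 - j)) n := by
    ext a
    simp only [List.mem_toFinset, List.mem_filter, List.mem_range'_1, decide_eq_true_eq,
      Finset.mem_Icc]
    omega
  rw [this, Nat.card_Icc]
  omega

lemma codeList_mem_codes (hj : 1 ≤ j) {w : List ℕ} (hw : w.Perm (List.range' 1 n)) :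
    codeList j n w ∈ codes j n := by
  induction n generalizing w with
  | zero =>
    rw [List.range'_zero, List.perm_nil] at hw
    simp [hw, codes, codeList]
  | succ n ih =>
    obtain ⟨p, q, rfl⟩ :=
      List.append_of_mem (hw.mem_iff.mpr (by simp : n + 1 ∈ List.range' 1 (n + 1)))
    have hpq := perm_range'_succ_iff.mp hw
    have hle : p.countP (InWindow j (n + 1) ·) ≤ min n (j - 1) := by
      rw [← countP_inWindow_range' hj, ← hpq.countP_eq]
      exact (List.sublist_append_left p q).countP_le
    rw [codeList_succ, code_middle_self (hw.nodup_iff.mpr List.nodup_range')]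
    have hk : p.countP (InWindow j (n + 1) ·) < min (n + 1) j := by omega
    simp only [codes, Finset.mem_image, Finset.mem_product, Finset.mem_range]
    exact ⟨(codeList j n (p ++ q), _), ⟨ih hpq, hk⟩, rfl⟩

lemma exists_codeList_eq (hj : 1 ≤ j) {c : List ℕ} (hc : c ∈ codes j n) :
    ∃ w, w.Perm (List.range' 1 n) ∧ codeList j n w = c := by
  induction n generalizing c with
  | zero =>
    rw [codes, Finset.mem_singleton] at hc
    exact ⟨[], by simp, by simp [hc, codeList]⟩
  | succ n ih =>
    simp only [codes, Finset.mem_image, Finset.mem_product, Finset.mem_range] at hc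
    obtain ⟨⟨c, k⟩, ⟨hc, hk⟩, rfl⟩ := hc
    obtain ⟨w, hw, rfl⟩ := ih hc
    obtain ⟨p, q, rfl, hp⟩ := List.exists_append_countP_eq (InWindow j (n + 1) ·) w (k := k)
      (by rw [hw.countP_eq, countP_inWindow_range' hj]; omega)
    have hw' := perm_range'_succ_iff.mpr hw
    refine ⟨p ++ (n + 1) :: q, hw', ?_⟩
    rw [codeList_succ, code_middle_self (hw'.nodup_iff.mpr List.nodup_range'), hp]

lemma image_codeList (hj : 1 ≤ j) :
    codeList j n '' {w | w.Perm (List.range' 1 n)} = codes j n := by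
  ext c
  refine ⟨?_, fun hc => ?_⟩
  · rintro ⟨w, hw, rfl⟩
    exact codeList_mem_codes hj hw
  · obtain ⟨w, hw, rfl⟩ := exists_codeList_eq hj hc
    exact ⟨w, hw, rfl⟩

lemma eqvGen_iff_codeList_eq (hu : u.Perm (List.range' 1 n)) (hv : v.Perm (List.range' 1 n)) :
    Relation.EqvGen (AdjSwapGe j) u v ↔ codeList j n u = codeList j n v := by
  refine ⟨fun h => by rw [codeList, codeList, code_eq_of_eqvGen h], fun h => ?_⟩
  have hp : u.Perm v := hu.trans hv.symm
  have hnd : u.Nodup := hu.nodup_iff.mpr List.nodup_range'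
  rw [codeList, codeList, List.map_inj_left] at h
  exact eqvGen_of_precedes_iff hp (hp.nodup_iff.mp hnd) fun x y hxy hyx =>
    precedes_iff_of_code_eq hp hnd (fun m hm => h m (hu.mem_iff.mp hm)) hxy hyx

end Counting

end JEquivalence

open JEquivalence

/-- The number of equivalence classes on `Sₙ` (permutations of `1,…,n` in one-line
notation) of the relation generated by interchanging adjacent entries differing by at
least `j` is `n!` for `n ≤ j` and `j! · j^(n-j)` for `n > j`. -/
theorem stmt0 (j n : ℕ) (hj : 2 ≤ j) :
    numClasses (AdjSwapGe j) {w : List ℕ | w.Perm (List.range' 1 n)} =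
      if n ≤ j then n.factorial else j.factorial * j ^ (n - j) := by
  set W := {w : List ℕ | w.Perm (List.range' 1 n)}
  have hclasses : {C | ∃ w ∈ W, C = {v | Relation.EqvGen (AdjSwapGe j) w v}} =
      (fun w => {v | Relation.EqvGen (AdjSwapGe j) w v}) '' W := by
    ext
    simp [eq_comm]
  rw [numClasses, hclasses, Set.ncard_image_eq_ncard_image_of_iff (A := W) (g := codeList j n)
      fun u hu v hv => Relation.setOf_eqvGen_eq_iff.trans (eqvGen_iff_codeList_eq hu hv),
    image_codeList (by omega), Set.ncard_coe_finset, card_codes, prod_range_min_succ]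
end

section
/- Every equivalence class of the relation ∼ on S_n contains exactly one salient permutation. -/
/-- One interchange of two adjacent entries of a word whose values differ by exactly 1. -/
def AdjSwap1 (u v : List ℕ) : Prop :=
  ∃ (p q : List ℕ) (x y : ℕ), ((x : ℤ) - (y : ℤ)).natAbs = 1 ∧
    u = p ++ x :: y :: q ∧ v = p ++ y :: x :: q

/-- A word `w = a₁ a₂ ⋯ aₙ` is salient if we never have `aᵢ = aᵢ₊₁ + 1`
and never have `aᵢ = aᵢ₊₁ + 2 = aᵢ₊₂ + 1`. -/
def Salient (w : List ℕ) : Prop :=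
  (∀ (p q : List ℕ) (x y : ℕ), w = p ++ x :: y :: q → x ≠ y + 1) ∧
  (∀ (p q : List ℕ) (x y z : ℕ), w = p ++ x :: y :: z :: q → ¬(x = y + 2 ∧ x = z + 1))

/-!
Every word `w` with distinct letters is `∼`-equivalent to its salient form, obtained by inserting
the letters of `w` one at a time, from the right, into a salient word. A letter `x` placed in front
of a salient word moves past a letter `x - 1`; in front of a forbidden triple `x (x - 2) (x - 1)`
it becomes `(x - 1) x` followed by `x - 2` inserted into the rest. Both moves are `∼`-steps, and
the result is again salient. Inserting two consecutive values in either order gives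
the same word, so the salient form is constant on `∼`-classes; as it fixes salient words, a class
contains exactly one of them.
-/

def SalientRec : List ℕ → Prop
  | [] => True
  | [_] => True
  | [x, y] => x ≠ y + 1
  | x :: y :: z :: t => x ≠ y + 1 ∧ ¬(x = y + 2 ∧ x = z + 1) ∧ SalientRec (y :: z :: t)

namespace SalientRec

theorem of_cons {x : ℕ} {t : List ℕ} (h : SalientRec (x :: t)) : SalientRec t := by
  match t with
  | [] | [_] => trivial
  | _ :: _ :: _ => exact h.2.2

theorem cons_of_forall_ne {x : ℕ} {m : List ℕ} (hm : SalientRec m) (h : ∀ a ∈ m, x ≠ a + 1) :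
    SalientRec (x :: m) := by
  match m with
  | [] => trivial
  | [y] => exact h y (by simp)
  | y :: z :: _ => exact ⟨h y (by simp), fun hc => h z (by simp) hc.2, hm⟩

theorem cons_cons {x z : ℕ} {m : List ℕ} (hm : SalientRec (x :: m)) (h₁ : z ≠ x + 1)
    (h₂ : z ≠ x + 2) : SalientRec (z :: x :: m) := by
  match m with
  | [] => exact h₁
  | _ :: _ => exact ⟨h₁, fun hc => h₂ hc.1, hm⟩

end SalientRec

theorem Salient.of_cons {x : ℕ} {t : List ℕ} (h : Salient (x :: t)) : Salient t :=
  ⟨fun p q a b hd => h.1 (x :: p) q a b (by simp [hd]),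
    fun p q a b c hd => h.2 (x :: p) q a b c (by simp [hd])⟩

theorem salientRec_of_salient : ∀ {l : List ℕ}, Salient l → SalientRec l
  | [], _ | [_], _ => trivial
  | [x, y], h => h.1 [] [] x y rfl
  | x :: y :: z :: t, h =>
    ⟨h.1 [] (z :: t) x y rfl, h.2 [] t x y z rfl, salientRec_of_salient h.of_cons⟩

theorem salient_of_salientRec : ∀ {l : List ℕ}, SalientRec l → Salient l
  | [], _ => ⟨fun p _ _ _ h => by simp at h, fun p _ _ _ _ h => by simp at h⟩
  | a :: t, h => by
    have ih := salient_of_salientRec h.of_cons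
    refine ⟨fun p q x y hd => ?_, fun p q x y z hd => ?_⟩
    · cases p with
      | nil =>
        obtain ⟨rfl, rfl⟩ := List.cons.inj hd
        cases q with
        | nil => exact h
        | cons _ _ => exact h.1
      | cons _ p => exact ih.1 p q x y (List.cons.inj hd).2
    · cases p with
      | nil =>
        obtain ⟨rfl, rfl⟩ := List.cons.inj hd
        exact h.2.1
      | cons _ p => exact ih.2 p q x y z (List.cons.inj hd).2

theorem salient_iff_salientRec {l : List ℕ} : Salient l ↔ SalientRec l :=
  ⟨salientRec_of_salient, salient_of_salientRec⟩

theorem AdjSwap1.cons {u v : List ℕ} (c : ℕ) (h : AdjSwap1 u v) : AdjSwap1 (c :: u) (c :: v) := by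
  obtain ⟨p, q, x, y, hxy, rfl, rfl⟩ := h
  exact ⟨c :: p, q, x, y, hxy, rfl, rfl⟩

theorem AdjSwap1.perm {u v : List ℕ} (h : AdjSwap1 u v) : u.Perm v := by
  obtain ⟨p, q, x, y, -, rfl, rfl⟩ := h
  exact (List.Perm.swap y x q).append_left p

theorem eqvGen_adjSwap1_cons {u v : List ℕ} (c : ℕ) (h : Relation.EqvGen AdjSwap1 u v) :
    Relation.EqvGen AdjSwap1 (c :: u) (c :: v) :=
  Quot.eqvGen_exact <| congrArg (Quot.map (c :: ·) fun _ _ => AdjSwap1.cons c) (Quot.eqvGen_sound h)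

theorem eqvGen_adjSwap1_perm {u v : List ℕ} (h : Relation.EqvGen AdjSwap1 u v) : u.Perm v :=
  (List.Perm.eqv ℕ).eqvGen_iff.mp (Relation.EqvGen.mono (fun _ _ => AdjSwap1.perm) _ _ h)

def salientInsert : ℕ → List ℕ → List ℕ
  | x, [] => [x]
  | x, [y] => if x = y + 1 then [y, x] else [x, y]
  | x, y :: z :: t =>
    if x = y + 1 then y :: x :: z :: t
    else if x = y + 2 ∧ x = z + 1 then z :: x :: salientInsert y t
    else x :: y :: z :: t

section salientInsert

variable {x y z : ℕ}

theorem salientInsert_of_eq_succ (t : List ℕ) (h : x = y + 1) :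
    salientInsert x (y :: t) = y :: x :: t := by
  match t with
  | [] | _ :: _ => simp only [salientInsert, if_pos h]

theorem salientInsert_singleton_of_ne (h : x ≠ y + 1) : salientInsert x [y] = [x, y] := by
  simp only [salientInsert, if_neg h]

theorem salientInsert_of_forbidden (t : List ℕ) (h₂ : x = y + 2) (h₁ : x = z + 1) :
    salientInsert x (y :: z :: t) = z :: x :: salientInsert y t := by
  simp only [salientInsert, if_neg (show x ≠ y + 1 by omega), if_pos (And.intro h₂ h₁)]

theorem salientInsert_of_not_forbidden (t : List ℕ) (h₁ : x ≠ y + 1)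
    (h₂ : ¬(x = y + 2 ∧ x = z + 1)) : salientInsert x (y :: z :: t) = x :: y :: z :: t := by
  simp only [salientInsert, if_neg h₁, if_neg h₂]

theorem salientInsert_perm : ∀ (x : ℕ) (l : List ℕ), (salientInsert x l).Perm (x :: l)
  | x, [] => by simp [salientInsert]
  | x, [y] => by
    simp only [salientInsert]
    split_ifs
    · exact List.Perm.swap x y []
    · rfl
  | x, y :: z :: t => by
    simp only [salientInsert]
    split_ifs
    · exact List.Perm.swap x y (z :: t)
    · exact (((salientInsert_perm y t).cons x).cons z).trans <|
        (List.Perm.swap x z (y :: t)).trans ((List.Perm.swap y z t).cons x)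
    · rfl

theorem mem_salientInsert {a : ℕ} {l : List ℕ} :
    a ∈ salientInsert x l ↔ a = x ∨ a ∈ l := by
  simpa using (salientInsert_perm x l).mem_iff

theorem eqvGen_salientInsert :
    ∀ (x : ℕ) (l : List ℕ), Relation.EqvGen AdjSwap1 (x :: l) (salientInsert x l)
  | x, [] => .refl _
  | x, [y] => by
    by_cases h : x = y + 1
    · rw [salientInsert_of_eq_succ [] h]
      exact .rel _ _ ⟨[], [], x, y, by omega, rfl, rfl⟩
    · rw [salientInsert_singleton_of_ne h]
      exact .refl _
  | x, y :: z :: t => by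
    by_cases h₁ : x = y + 1
    · rw [salientInsert_of_eq_succ (z :: t) h₁]
      exact .rel _ _ ⟨[], z :: t, x, y, by omega, rfl, rfl⟩
    by_cases h₂ : x = y + 2 ∧ x = z + 1
    · rw [salientInsert_of_forbidden t h₂.1 h₂.2]
      have swap_yz : Relation.EqvGen AdjSwap1 (x :: y :: z :: t) (x :: z :: y :: t) :=
        .rel _ _ ⟨[x], t, y, z, by omega, rfl, rfl⟩
      have swap_xz : Relation.EqvGen AdjSwap1 (x :: z :: y :: t) (z :: x :: y :: t) :=
        .rel _ _ ⟨[], y :: t, x, z, by omega, rfl, rfl⟩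
      exact (swap_yz.trans _ _ _ swap_xz).trans _ _ _
        (eqvGen_adjSwap1_cons z (eqvGen_adjSwap1_cons x (eqvGen_salientInsert y t)))
    · rw [salientInsert_of_not_forbidden t h₁ h₂]
      exact .refl _

theorem SalientRec.salientInsert :
    ∀ {x : ℕ} {l : List ℕ}, SalientRec l → (x :: l).Nodup → SalientRec (salientInsert x l)
  | _, [], _, _ => trivial
  | x, [y], _, hn => by
    have : x ≠ y := by simpa using hn
    simp only [_root_.salientInsert]
    split_ifs with h
    · simp only [SalientRec]
      omega
    · exact h
  | x, y :: z :: t, hs, hn => by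
    simp only [List.nodup_cons, List.mem_cons, not_or] at hn
    obtain ⟨⟨hxy, hxz, hxt⟩, ⟨hyz, hyt⟩, hzt, ht⟩ := hn
    simp only [_root_.salientInsert]
    split_ifs with h₁ h₂
    · refine SalientRec.cons_cons (SalientRec.cons_of_forall_ne hs.of_cons ?_) (by omega) (by omega)
      intro a ha
      rcases List.mem_cons.mp ha with rfl | ha
      · omega
      · intro hxa
        obtain rfl : a = y := by omega
        exact hyt ha
    · have hrest : SalientRec (_root_.salientInsert y t) :=
        hs.of_cons.of_cons.salientInsert (List.nodup_cons.mpr ⟨hyt, ht⟩)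
      refine SalientRec.cons_cons (SalientRec.cons_of_forall_ne hrest ?_) (by omega) (by omega)
      intro a ha
      rcases mem_salientInsert.mp ha with rfl | ha
      · omega
      · intro hxa
        obtain rfl : a = z := by omega
        exact hzt ha
    · exact ⟨h₁, h₂, hs⟩

theorem salientInsert_eq_cons : ∀ {x : ℕ} {l : List ℕ}, SalientRec (x :: l) →
    salientInsert x l = x :: l
  | _, [], _ => rfl
  | _, [_], h => salientInsert_singleton_of_ne h
  | _, _ :: _ :: t, h => salientInsert_of_not_forbidden t h.1 h.2.1

theorem salientInsert_succ_of_not_mem {a : ℕ} {m : List ℕ} (ha : a ∉ m) :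
    salientInsert (a + 1) m = (a + 1) :: m := by
  match m with
  | [] => rfl
  | [y] =>
    have : y ≠ a := by rintro rfl; simp at ha
    exact salientInsert_singleton_of_ne (by omega)
  | y :: z :: t =>
    have : y ≠ a ∧ z ≠ a := by constructor <;> rintro rfl <;> simp at ha
    exact salientInsert_of_not_forbidden t (by omega) (by omega)

theorem salientInsert_salientInsert_succ {a : ℕ} {m : List ℕ} (ha : a ∉ m) :
    salientInsert a (salientInsert (a + 1) m) = a :: (a + 1) :: m := by
  rw [salientInsert_succ_of_not_mem ha]
  match m with
  | [] => exact salientInsert_singleton_of_ne (by omega)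
  | _ :: t => exact salientInsert_of_not_forbidden t (by omega) (by omega)

theorem salientInsert_succ_salientInsert :
    ∀ {a : ℕ} {m : List ℕ}, SalientRec m → m.Nodup → a ∉ m → a + 1 ∉ m →
      salientInsert (a + 1) (salientInsert a m) = a :: (a + 1) :: m
  | _, [], _, _, _, _ => by simp [salientInsert]
  | a, [y], _, _, ha, hb => by
    simp only [List.mem_singleton] at ha hb
    by_cases h : a = y + 1
    · rw [salientInsert_of_eq_succ [] h, salientInsert_of_forbidden [] (by omega) rfl]
      rfl
    · rw [salientInsert_singleton_of_ne h, salientInsert_of_eq_succ [y] rfl]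
  | a, y :: z :: t, hs, hn, ha, hb => by
    simp only [List.mem_cons, not_or] at ha hb
    by_cases h₁ : a = y + 1
    · rw [salientInsert_of_eq_succ (z :: t) h₁,
        salientInsert_of_forbidden (z :: t) (by omega) rfl, salientInsert_eq_cons hs]
    by_cases h₂ : a = y + 2 ∧ a = z + 1
    · obtain rfl : z = y + 1 := by omega
      simp only [List.nodup_cons, List.mem_cons, not_or] at hn
      rw [salientInsert_of_forbidden t h₂.1 h₂.2,
        salientInsert_of_forbidden (salientInsert y t) (by omega) (by omega),
        salientInsert_succ_salientInsert hs.of_cons.of_cons hn.2.2 hn.1.2 hn.2.1, h₂.1]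
    · rw [salientInsert_of_not_forbidden t h₁ h₂, salientInsert_of_eq_succ (y :: z :: t) rfl]

theorem salientInsert_comm_of_adjSwap {x y : ℕ} {m : List ℕ} (hm : SalientRec m)
    (hn : (x :: y :: m).Nodup) (hxy : ((x : ℤ) - (y : ℤ)).natAbs = 1) :
    salientInsert x (salientInsert y m) = salientInsert y (salientInsert x m) := by
  simp only [List.nodup_cons, List.mem_cons, not_or] at hn
  obtain ⟨⟨-, hx⟩, hy, hm'⟩ := hn
  rcases (by omega : x = y + 1 ∨ y = x + 1) with rfl | rfl
  · rw [salientInsert_succ_salientInsert hm hm' hy hx, salientInsert_salientInsert_succ hy]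
  · rw [salientInsert_salientInsert_succ hx, salientInsert_succ_salientInsert hm hm' hx hy]

end salientInsert

def salientForm (w : List ℕ) : List ℕ :=
  w.foldr salientInsert []

theorem salientForm_perm : ∀ w : List ℕ, (salientForm w).Perm w
  | [] => .nil
  | x :: t => (salientInsert_perm x _).trans ((salientForm_perm t).cons x)

theorem eqvGen_salientForm : ∀ w : List ℕ, Relation.EqvGen AdjSwap1 w (salientForm w)
  | [] => .refl _
  | x :: t => (eqvGen_adjSwap1_cons x (eqvGen_salientForm t)).trans _ _ _
    (eqvGen_salientInsert x _)

theorem salientRec_salientForm : ∀ {w : List ℕ}, w.Nodup → SalientRec (salientForm w)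
  | [], _ => trivial
  | x :: t, hn => by
    obtain ⟨hx, ht⟩ := List.nodup_cons.mp hn
    refine (salientRec_salientForm ht).salientInsert (List.nodup_cons.mpr ⟨?_, ?_⟩)
    · exact fun h => hx ((salientForm_perm t).mem_iff.mp h)
    · exact (salientForm_perm t).nodup_iff.mpr ht

theorem salientForm_eq_self : ∀ {w : List ℕ}, SalientRec w → salientForm w = w
  | [], _ => rfl
  | x :: t, h => by
    change salientInsert x (salientForm t) = x :: t
    rw [salientForm_eq_self h.of_cons, salientInsert_eq_cons h]

theorem AdjSwap1.salientForm_eq {u v : List ℕ} (h : AdjSwap1 u v) (hn : u.Nodup) :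
    salientForm u = salientForm v := by
  obtain ⟨p, q, x, y, hxy, rfl, rfl⟩ := h
  simp only [salientForm, List.foldr_append]
  congr 1
  have hq : (x :: y :: q).Nodup := (List.nodup_append.mp hn).2.1
  have hq' : (x :: y :: salientForm q).Nodup :=
    ((salientForm_perm q).cons y |>.cons x).nodup_iff.mpr hq
  exact salientInsert_comm_of_adjSwap (salientRec_salientForm hq.of_cons.of_cons) hq' hxy

theorem salientForm_eq_of_eqvGen {u v : List ℕ} (h : Relation.EqvGen AdjSwap1 u v)
    (hn : u.Nodup) : salientForm u = salientForm v := by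
  induction h with
  | rel _ _ h => exact h.salientForm_eq hn
  | refl => rfl
  | symm _ _ hab ih => exact (ih ((eqvGen_adjSwap1_perm hab).nodup_iff.mpr hn)).symm
  | trans _ _ _ hab _ ih₁ ih₂ =>
    exact (ih₁ hn).trans (ih₂ ((eqvGen_adjSwap1_perm hab).nodup_iff.mp hn))

/-- Every equivalence class of the relation `∼` on `Sₙ` (generated by interchanging
adjacent entries differing by exactly one) contains exactly one salient permutation. -/
theorem stmt1 (n : ℕ) (w : List ℕ) (hw : w.Perm (List.range' 1 n)) :
    ∃! v : List ℕ, Relation.EqvGen AdjSwap1 w v ∧ Salient v := by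
  have hnd : w.Nodup := hw.nodup_iff.mpr List.nodup_range'
  refine ⟨salientForm w,
    ⟨eqvGen_salientForm w, salient_iff_salientRec.mpr (salientRec_salientForm hnd)⟩, ?_⟩
  rintro v ⟨hwv, hv⟩
  rw [← salientForm_eq_self (salient_iff_salientRec.mp hv), ← salientForm_eq_of_eqvGen hwv hnd]
end

section
/- The number of salient permutations in S_n equals Σ_{j=0}^{⌊n/2⌋} (−1)^j (n−j)! · C(n−j, j). Consequently, the number of permutations w ∈ S_n that never contain the factor (consecutive entries) i+1, i and never contain the factor i+2, i, i+1 is given by this alternating sum. -/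
namespace List

variable {α : Type*}

theorem infix_iff_exists_eq_append {l w : List α} : l <:+: w ↔ ∃ p q, w = p ++ l ++ q :=
  ⟨fun ⟨p, q, h⟩ => ⟨p, q, h.symm⟩, fun ⟨p, q, h⟩ => ⟨p, q, h.symm⟩⟩

theorem IsInfix.pair_left {w : List α} {a b c : α} (h : [a, b, c] <:+: w) : [a, b] <:+: w :=
  IsInfix.trans ⟨[], [c], rfl⟩ h

theorem IsInfix.pair_right {w : List α} {a b c : α} (h : [a, b, c] <:+: w) : [b, c] <:+: w :=
  IsInfix.trans ⟨[a], [], rfl⟩ h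

theorem Nodup.eq_of_append_cons_eq {p q r s : List α} {a : α} (hl : (p ++ a :: q).Nodup)
    (h : p ++ a :: q = r ++ a :: s) : p = r ∧ q = s := by
  classical
  have hp : a ∉ p := fun ha => (nodup_middle.1 hl).notMem (mem_append_left q ha)
  have hr : a ∉ r := fun ha => (nodup_middle.1 (h ▸ hl)).notMem (mem_append_left s ha)
  have hlen : p.length = r.length := by
    simpa [idxOf_append_of_notMem hp, idxOf_append_of_notMem hr] using congrArg (idxOf a) h
  obtain ⟨rfl, h'⟩ := append_inj h hlen
  exact ⟨rfl, (cons_inj_right a).1 h'⟩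

theorem Nodup.right_eq_of_pair_infix {w : List α} {a b c : α} (hw : w.Nodup)
    (hb : [a, b] <:+: w) (hc : [a, c] <:+: w) : b = c := by
  obtain ⟨s, t, rfl⟩ := hb
  obtain ⟨s', t', h⟩ := hc
  simp only [append_assoc, cons_append, nil_append] at hw h
  exact (cons_eq_cons.1 (hw.eq_of_append_cons_eq h.symm).2).1

theorem Nodup.left_eq_of_pair_infix {w : List α} {a b c : α} (hw : w.Nodup)
    (ha : [a, c] <:+: w) (hb : [b, c] <:+: w) : a = b := by
  obtain ⟨s, t, rfl⟩ := ha
  obtain ⟨s', t', h⟩ := hb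
  have e : ∀ s (x : α) t, s ++ [x, c] ++ t = (s ++ [x]) ++ c :: t := by simp
  simp only [e] at hw h
  exact (append_singleton_inj.1 (hw.eq_of_append_cons_eq h.symm).1).2

theorem Nodup.triple_infix_of_pair_infix {w : List α} {a b c : α} (hw : w.Nodup)
    (hab : [a, b] <:+: w) (hbc : [b, c] <:+: w) : [a, b, c] <:+: w := by
  obtain ⟨s, t, rfl⟩ := hab
  obtain ⟨s', t', h⟩ := hbc
  have e : s ++ [a, b] ++ t = (s ++ [a]) ++ b :: t := by simp
  rw [e] at hw h ⊢
  have e' : s' ++ [b, c] ++ t' = s' ++ b :: c :: t' := by simp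
  rw [e'] at h
  obtain ⟨-, rfl⟩ := hw.eq_of_append_cons_eq h.symm
  exact ⟨s, t', by simp⟩

theorem Nodup.map_swap_perm [DecidableEq α] {l : List α} {a b : α} (hl : l.Nodup)
    (ha : a ∈ l) (hb : b ∈ l) : l.map (Equiv.swap a b) ~ l := by
  refine (perm_ext_iff_of_nodup (hl.map (Equiv.injective _)) hl).2 fun x => ?_
  rw [mem_map_of_involutive (Equiv.swap_apply_self a b)]
  rcases eq_or_ne x a with rfl | hxa
  · simp [ha, hb]
  rcases eq_or_ne x b with rfl | hxb
  · simp [ha, hb]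
  rw [Equiv.swap_apply_of_ne_of_ne hxa hxb]

theorem infix_map_swap_iff [DecidableEq α] (a b : α) {l w : List α} :
    l <:+: w.map (Equiv.swap a b) ↔ l.map (Equiv.swap a b) <:+: w :=
  ⟨fun h => by simpa [Function.comp_def] using h.map (Equiv.swap a b),
    fun h => by simpa [Function.comp_def] using h.map (Equiv.swap a b)⟩

theorem IsInfix.pair_erase [DecidableEq α] {w : List α} {x y a : α} (hx : x ≠ a) (hy : y ≠ a)
    (h : [x, y] <:+: w) : [x, y] <:+: w.erase a := by
  obtain ⟨s, t, rfl⟩ := h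
  by_cases hs : a ∈ s
  · rw [append_assoc, erase_append_left _ hs]
    exact ⟨s.erase a, t, by simp⟩
  · rw [append_assoc, erase_append_right _ hs]
    exact ⟨s, t.erase a, by simp [hx, hy]⟩

variable [DecidableEq α]

def insertAfter (b a : α) : List α → List α
  | [] => []
  | x :: xs => if x = b then x :: a :: xs else x :: insertAfter b a xs

theorem insertAfter_append_cons {b a : α} {p : List α} (q : List α) (hp : b ∉ p) :
    insertAfter b a (p ++ b :: q) = p ++ b :: a :: q := by
  induction p with
  | nil => simp [insertAfter]
  | cons x p ih =>
    rw [mem_cons, not_or] at hp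
    simp [insertAfter, Ne.symm hp.1, ih hp.2]

theorem exists_insertAfter_eq {b : α} {u : List α} (hb : b ∈ u) :
    ∃ p q, u = p ++ b :: q ∧ ∀ a, insertAfter b a u = p ++ b :: a :: q := by
  induction u with
  | nil => simp at hb
  | cons x u ih =>
    by_cases hx : x = b
    · subst hx
      exact ⟨[], u, rfl, fun a => by simp [insertAfter]⟩
    · obtain ⟨p, q, rfl, h⟩ := ih ((mem_cons.1 hb).resolve_left (Ne.symm hx))
      exact ⟨x :: p, q, rfl, fun a => by simp [insertAfter, hx, h]⟩

theorem perm_insertAfter {b a : α} {u : List α} (hb : b ∈ u) : insertAfter b a u ~ a :: u := by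
  obtain ⟨p, q, rfl, h⟩ := exists_insertAfter_eq hb
  rw [h]
  exact (perm_append_left_iff p).2 (.swap a b q) |>.trans perm_middle

theorem pair_infix_insertAfter {b a : α} {u : List α} (hb : b ∈ u) :
    [b, a] <:+: insertAfter b a u := by
  obtain ⟨p, q, rfl, h⟩ := exists_insertAfter_eq hb
  exact ⟨p, q, by simp [h]⟩

theorem IsInfix.pair_insertAfter {b a x y : α} {u : List α} (hx : x ≠ b) (h : [x, y] <:+: u) :
    [x, y] <:+: insertAfter b a u := by
  induction u with
  | nil => simp at h
  | cons z u ih =>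
    rcases infix_cons_iff.1 h with h | h
    · obtain ⟨r, hr⟩ := h
      obtain ⟨rfl, rfl⟩ : x = z ∧ y :: r = u := by simpa using hr
      by_cases hy : y = b <;> simp only [insertAfter, hx, hy, if_true, if_false] <;>
        exact ⟨[], _, rfl⟩
    · by_cases hz : z = b <;> simp only [insertAfter, hz, if_true, if_false]
      · exact h.trans ((suffix_cons _ _).trans (suffix_cons _ _)).isInfix
      · exact (ih h).trans (suffix_cons _ _).isInfix

theorem erase_insertAfter {b a : α} {u : List α} (ha : a ∉ u) :
    (insertAfter b a u).erase a = u := by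
  induction u with
  | nil => rfl
  | cons x u ih =>
    rw [mem_cons, not_or] at ha
    by_cases hx : x = b
    · subst hx
      simp [insertAfter, Ne.symm ha.1]
    · simp [insertAfter, hx, Ne.symm ha.1, ih ha.2]

theorem Nodup.insertAfter_erase {b a : α} {w : List α} (hw : w.Nodup) (h : [b, a] <:+: w) :
    insertAfter b a (w.erase a) = w := by
  obtain ⟨s, t, rfl⟩ := h
  simp only [append_assoc, cons_append, nil_append] at hw ⊢
  rw [nodup_append] at hw
  have hs : a ∉ s ∧ b ∉ s :=
    ⟨fun h => hw.2.2 a h a (by simp) rfl, fun h => hw.2.2 b h b (by simp) rfl⟩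
  have hab : a ≠ b := fun h => by simp [h] at hw
  rw [erase_append_right _ hs.1, erase_cons_tail (by simpa using hab.symm), erase_cons_head,
    insertAfter_append_cons _ hs.2]

end List

open scoped symmDiff in
theorem Finset.neg_one_pow_card_symmDiff {α R : Type*} [DecidableEq α] [CommMonoid R]
    [HasDistribNeg R] (s t : Finset α) :
    (-1 : R) ^ (s ∆ t).card = (-1) ^ s.card * (-1) ^ t.card := by
  have hs := card_sdiff_add_card_inter s t
  have ht := card_sdiff_add_card_inter t s
  rw [Finset.symmDiff_def, card_union_of_disjoint disjoint_sdiff_sdiff, ← hs, ← ht, inter_comm,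
    pow_add, pow_add, pow_add, mul_mul_mul_comm, ← mul_pow, neg_one_mul, neg_neg, one_pow, mul_one]

open Finset
open scoped symmDiff

namespace SalientPermutation

/-- The factor whose occurrence is the event `A i` (encoded `inl i`) or `B i` (`inr i`). -/
def pattern : ℕ ⊕ ℕ → List ℕ
  | .inl i => [i + 1, i]
  | .inr i => [i + 2, i, i + 1]

def occurrences (w : List ℕ) : Finset (ℕ ⊕ ℕ) :=
  {e ∈ w.toFinset.disjSum w.toFinset | pattern e <:+: w}

theorem mem_occurrences {w : List ℕ} {e : ℕ ⊕ ℕ} : e ∈ occurrences w ↔ pattern e <:+: w := by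
  refine mem_filter.trans ⟨And.right, fun h => ⟨?_, h⟩⟩
  cases e <;> simpa [pattern] using h.subset (by simp [pattern])

theorem salient_iff (w : List ℕ) : Salient w ↔ ∀ i : ℕ,
    (¬ ∃ p q : List ℕ, w = p ++ (i + 1) :: i :: q) ∧
    (¬ ∃ p q : List ℕ, w = p ++ (i + 2) :: i :: (i + 1) :: q) := by
  constructor
  · rintro ⟨h₁, h₂⟩ i
    exact ⟨fun ⟨p, q, e⟩ => h₁ p q _ _ e rfl, fun ⟨p, q, e⟩ => h₂ p q _ _ _ e ⟨rfl, rfl⟩⟩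
  · intro h
    refine ⟨fun p q x y e hxy => (h y).1 ⟨p, q, hxy ▸ e⟩, fun p q x y z e ⟨hy, hz⟩ => ?_⟩
    obtain rfl : z = y + 1 := by omega
    exact (h y).2 ⟨p, q, hy ▸ e⟩

theorem salient_iff_occurrences_eq_empty (w : List ℕ) : Salient w ↔ occurrences w = ∅ := by
  rw [salient_iff, eq_empty_iff_forall_notMem]
  simp only [mem_occurrences, Sum.forall, pattern, List.infix_iff_exists_eq_append, forall_and,
    List.append_assoc, List.cons_append, List.nil_append]

def IsDefect (T : Finset (ℕ ⊕ ℕ)) (i : ℕ) : Prop :=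
  Sum.inr i ∈ T ∨ Sum.inl i ∈ T ∧ Sum.inl (i + 1) ∈ T

def toggleSet (i : ℕ) : Finset (ℕ ⊕ ℕ) := {Sum.inl i, Sum.inl (i + 1), Sum.inr i}

open Classical in
noncomputable def toggle (x : (_ : List ℕ) × Finset (ℕ ⊕ ℕ)) : (_ : List ℕ) × Finset (ℕ ⊕ ℕ) :=
  if h : ∃ i, IsDefect x.2 i then
    ⟨x.1.map (Equiv.swap (Nat.find h) (Nat.find h + 1)), x.2 ∆ toggleSet (Nat.find h)⟩
  else x

theorem neg_one_pow_card_toggle {x : (_ : List ℕ) × Finset (ℕ ⊕ ℕ)} (h : ∃ i, IsDefect x.2 i) :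
    (-1 : ℤ) ^ (toggle x).2.card = -(-1) ^ x.2.card := by
  rw [toggle, dif_pos h, neg_one_pow_card_symmDiff, show (toggleSet _).card = 3 by simp [toggleSet]]
  ring

section LeastDefect

variable {w : List ℕ} {T : Finset (ℕ ⊕ ℕ)} {i : ℕ}

theorem mem_of_isDefect (hT : T ⊆ occurrences w) (hi : IsDefect T i) : i ∈ w ∧ i + 1 ∈ w := by
  rcases hi with hB | ⟨hA, -⟩
  · have := (mem_occurrences.1 (hT hB)).subset
    exact ⟨this (by simp [pattern]), this (by simp [pattern])⟩
  · have := (mem_occurrences.1 (hT hA)).subset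
    exact ⟨this (by simp [pattern]), this (by simp [pattern])⟩

theorem toggle_eq (hi : IsDefect T i) (hmin : ∀ j < i, ¬IsDefect T j) :
    toggle ⟨w, T⟩ = ⟨w.map (Equiv.swap i (i + 1)), T ∆ toggleSet i⟩ := by
  classical
  have h : ∃ i, IsDefect T i := ⟨i, hi⟩
  obtain rfl : Nat.find h = i := (Nat.find_eq_iff h).2 ⟨hi, hmin⟩
  rw [toggle, dif_pos h]

theorem inl_notMem_of_inr_mem (hw : w.Nodup) (hT : T ⊆ occurrences w) (h : Sum.inr i ∈ T) :
    Sum.inl i ∉ T ∧ Sum.inl (i + 1) ∉ T := by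
  have hB := mem_occurrences.1 (hT h)
  refine ⟨fun hA => ?_, fun hA => ?_⟩
  · have := hw.left_eq_of_pair_infix (mem_occurrences.1 (hT hA)) hB.pair_left
    omega
  · have := hw.right_eq_of_pair_infix (mem_occurrences.1 (hT hA)) hB.pair_left
    omega

theorem inl_pred_notMem (hw : w.Nodup) (hT : T ⊆ occurrences w) (hi : IsDefect T i)
    (hmin : ∀ j < i, ¬IsDefect T j) {j : ℕ} (hj : Sum.inl j ∈ T) : j + 1 ≠ i := by
  rintro rfl
  rcases hi with hB | ⟨hA, -⟩
  · have := hw.right_eq_of_pair_infix (mem_occurrences.1 (hT hj))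
      (mem_occurrences.1 (hT hB)).pair_right
    omega
  · exact hmin j (Nat.lt_succ_self j) (Or.inr ⟨hj, hA⟩)

theorem inr_succ_notMem (hw : w.Nodup) (hT : T ⊆ occurrences w) (hi : IsDefect T i) :
    Sum.inr (i + 1) ∉ T := by
  intro h
  have h' := mem_occurrences.1 (hT h)
  rcases hi with hB | ⟨hA, -⟩
  · have := hw.left_eq_of_pair_infix h'.pair_left (mem_occurrences.1 (hT hB)).pair_right
    omega
  · have := hw.right_eq_of_pair_infix h'.pair_right (mem_occurrences.1 (hT hA))
    omega

theorem map_swap_pattern (hw : w.Nodup) (hT : T ⊆ occurrences w) (hi : IsDefect T i)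
    (hmin : ∀ j < i, ¬IsDefect T j) {e : ℕ ⊕ ℕ} (he : e ∈ T) (heX : e ∉ toggleSet i) :
    (pattern e).map (Equiv.swap i (i + 1)) = pattern e := by
  simp only [toggleSet, mem_insert, mem_singleton, not_or] at heX
  cases e with
  | inl j =>
    have := inl_pred_notMem hw hT hi hmin he
    simp only [pattern, List.map_cons, List.map_nil, Equiv.swap_apply_def]
    split_ifs <;> simp_all
  | inr j =>
    have h1 : j ≠ i + 1 := by rintro rfl; exact inr_succ_notMem hw hT hi he
    have h2 : ¬ j < i := fun hj => hmin j hj (Or.inl he)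
    simp only [pattern, List.map_cons, List.map_nil, Equiv.swap_apply_def]
    split_ifs <;> simp_all <;> omega

theorem symmDiff_toggleSet_subset (hw : w.Nodup) (hT : T ⊆ occurrences w) (hi : IsDefect T i)
    (hmin : ∀ j < i, ¬IsDefect T j) :
    T ∆ toggleSet i ⊆ occurrences (w.map (Equiv.swap i (i + 1))) := by
  intro e he
  rw [mem_occurrences, List.infix_map_swap_iff]
  rcases mem_symmDiff.1 he with ⟨heT, heX⟩ | ⟨heX, heT⟩
  · rw [map_swap_pattern hw hT hi hmin heT heX]
    exact mem_occurrences.1 (hT heT)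
  have hfix : Equiv.swap i (i + 1) (i + 2) = i + 2 :=
    Equiv.swap_apply_of_ne_of_ne (by omega) (by omega)
  simp only [toggleSet, mem_insert, mem_singleton] at heX
  rcases heX with rfl | rfl | rfl
  · have hB : Sum.inr i ∈ T := hi.resolve_right fun h => heT h.1
    simpa [pattern] using (mem_occurrences.1 (hT hB)).pair_right
  · have hB : Sum.inr i ∈ T := hi.resolve_right fun h => heT h.2
    simpa [pattern, hfix] using (mem_occurrences.1 (hT hB)).pair_left
  · obtain ⟨hA₀, hA₁⟩ := hi.resolve_left heT
    simpa [pattern, hfix] using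
      hw.triple_infix_of_pair_infix (mem_occurrences.1 (hT hA₁)) (mem_occurrences.1 (hT hA₀))

theorem isDefect_symmDiff_toggleSet (hw : w.Nodup) (hT : T ⊆ occurrences w) :
    IsDefect (T ∆ toggleSet i) i := by
  by_cases hB : Sum.inr i ∈ T
  · obtain ⟨hA₀, hA₁⟩ := inl_notMem_of_inr_mem hw hT hB
    exact Or.inr ⟨mem_symmDiff.2 (Or.inr ⟨by simp [toggleSet], hA₀⟩),
      mem_symmDiff.2 (Or.inr ⟨by simp [toggleSet], hA₁⟩)⟩
  · exact Or.inl (mem_symmDiff.2 (Or.inr ⟨by simp [toggleSet], hB⟩))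

theorem not_isDefect_symmDiff_toggleSet (hw : w.Nodup) (hT : T ⊆ occurrences w)
    (hi : IsDefect T i) (hmin : ∀ j < i, ¬IsDefect T j) {j : ℕ} (hj : j < i) :
    ¬IsDefect (T ∆ toggleSet i) j := by
  have hji : j ≠ i := hj.ne
  have hji' : j ≠ i + 1 := by omega
  rintro (h | ⟨h₀, h₁⟩)
  · refine hmin j hj (Or.inl ?_)
    simpa [mem_symmDiff, toggleSet, hji] using h
  · have h₀ : Sum.inl j ∈ T := by simpa [mem_symmDiff, toggleSet, hji, hji'] using h₀
    have := inl_pred_notMem hw hT hi hmin h₀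
    have h₁ : Sum.inl (j + 1) ∈ T := by simpa [mem_symmDiff, toggleSet, hji, this] using h₁
    exact hmin j hj (Or.inr ⟨h₀, h₁⟩)

end LeastDefect

def markedPerms (L : List ℕ) : Finset ((_ : List ℕ) × Finset (ℕ ⊕ ℕ)) :=
  L.permutations.toFinset.sigma fun w => (occurrences w).powerset

theorem mem_markedPerms {L : List ℕ} {x : (_ : List ℕ) × Finset (ℕ ⊕ ℕ)} :
    x ∈ markedPerms L ↔ x.1.Perm L ∧ x.2 ⊆ occurrences x.1 := by
  simp [markedPerms]

theorem toggle_spec {L : List ℕ} (hL : L.Nodup) {x : (_ : List ℕ) × Finset (ℕ ⊕ ℕ)}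
    (hx : x ∈ markedPerms L) (h : ∃ i, IsDefect x.2 i) :
    toggle x ∈ markedPerms L ∧ (∃ i, IsDefect (toggle x).2 i) ∧ toggle (toggle x) = x := by
  classical
  obtain ⟨w, T⟩ := x
  obtain ⟨hw, hT⟩ := mem_markedPerms.1 hx
  have hi := Nat.find_spec h
  have hmin : ∀ j < Nat.find h, ¬IsDefect T j := fun j => Nat.find_min h
  have hwn : w.Nodup := hw.nodup_iff.2 hL
  obtain ⟨hi₀, hi₁⟩ := mem_of_isDefect hT hi
  rw [toggle_eq hi hmin, toggle_eq (isDefect_symmDiff_toggleSet hwn hT)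
    (fun j hj => not_isDefect_symmDiff_toggleSet hwn hT hi hmin hj), mem_markedPerms]
  refine ⟨⟨(hwn.map_swap_perm hi₀ hi₁).trans hw, symmDiff_toggleSet_subset hwn hT hi hmin⟩,
    ⟨_, isDefect_symmDiff_toggleSet hwn hT⟩, ?_⟩
  simp [Function.comp_def, symmDiff_symmDiff_cancel_right]

open scoped Classical in
theorem sum_filter_exists_isDefect {L : List ℕ} (hL : L.Nodup) :
    ∑ x ∈ markedPerms L with ∃ i, IsDefect x.2 i, (-1 : ℤ) ^ x.2.card = 0 := by
  refine sum_involution (fun x _ => toggle x) (fun x hx => ?_) (fun x hx hx' hfix => ?_)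
    (fun x hx => ?_) (fun x hx => ?_) <;> rw [mem_filter] at hx
  · rw [neg_one_pow_card_toggle hx.2, add_neg_cancel]
  · apply hx'
    have := neg_one_pow_card_toggle hx.2
    rw [hfix] at this
    omega
  · obtain ⟨h₁, h₂, -⟩ := toggle_spec hL hx.1 hx.2
    exact mem_filter.2 ⟨h₁, h₂⟩
  · exact (toggle_spec hL hx.1 hx.2).2.2

/-- Sets of pairwise disjoint edges `{i, i+1}` of the path on the letters of `L`, each edge
recorded by its smaller end. -/
def pathMatchings (L : List ℕ) : Finset (Finset ℕ) :=
  {S ∈ L.toFinset.powerset | ∀ i ∈ S, i + 1 ∈ L ∧ i + 1 ∉ S}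

theorem mem_pathMatchings {L : List ℕ} {S : Finset ℕ} :
    S ∈ pathMatchings L ↔ ∀ i ∈ S, i ∈ L ∧ i + 1 ∈ L ∧ i + 1 ∉ S := by
  simp only [pathMatchings, mem_filter, mem_powerset, subset_iff, List.mem_toFinset]
  exact ⟨fun h i hi => ⟨h.1 hi, h.2 i hi⟩,
    fun h => ⟨fun i hi => (h i hi).1, fun i hi => (h i hi).2⟩⟩

open scoped Classical in
theorem sum_powerset_filter_not_exists_isDefect {L w : List ℕ} (hw : w.Perm L) :
    ∑ T ∈ (occurrences w).powerset with ¬∃ i, IsDefect T i, (-1 : ℤ) ^ T.card =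
      ∑ S ∈ pathMatchings L with ∀ i ∈ S, [i + 1, i] <:+: w, (-1 : ℤ) ^ S.card := by
  have hR : ∀ T ∈ (occurrences w).powerset.filter (¬∃ i, IsDefect · i), T.toRight = ∅ :=
    fun T hT => eq_empty_of_forall_notMem fun i hi =>
      (mem_filter.1 hT).2 ⟨i, Or.inl (mem_toRight.1 hi)⟩
  refine sum_nbij' toLeft (·.disjSum ∅) (fun T hT => ?_) (fun S hS => ?_) (fun T hT => ?_)
    (fun S _ => toLeft_disjSum) (fun T hT => ?_)
  · simp only [mem_filter, mem_powerset, not_exists, IsDefect, not_or, not_and] at hT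
    have hA : ∀ i ∈ T.toLeft, [i + 1, i] <:+: w := fun i hi =>
      mem_occurrences.1 (hT.1 (mem_toLeft.1 hi))
    refine mem_filter.2 ⟨mem_pathMatchings.2 fun i hi => ⟨?_, ?_, fun h =>
      (hT.2 i).2 (mem_toLeft.1 hi) (mem_toLeft.1 h)⟩, hA⟩ <;>
      exact hw.subset ((hA i hi).subset (by simp))
  · rw [mem_filter, mem_pathMatchings] at hS
    refine mem_filter.2 ⟨mem_powerset.2 fun e he => ?_, ?_⟩
    · obtain ⟨i, rfl⟩ : ∃ i, e = Sum.inl i := by cases e <;> simp_all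
      exact mem_occurrences.2 (hS.2 i (inl_mem_disjSum.1 he))
    · rintro ⟨i, hi | ⟨h₀, h₁⟩⟩
      · simp at hi
      · exact (hS.1 i (inl_mem_disjSum.1 h₀)).2.2 (inl_mem_disjSum.1 h₁)
  · rw [← hR T hT, toLeft_disjSum_toRight]
  · rw [← card_toLeft_add_card_toRight (u := T), hR T hT, card_empty, add_zero]

theorem mem_pathMatchings_erase {L : List ℕ} (hL : L.Nodup) {S : Finset ℕ} {a : ℕ}
    (hS : insert a S ∈ pathMatchings L) (ha : a ∉ S) : S ∈ pathMatchings (L.erase a) := by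
  rw [mem_pathMatchings] at hS ⊢
  intro i hi
  obtain ⟨h₀, h₁, h₂⟩ := hS i (mem_insert_of_mem hi)
  have hia : i ≠ a := by rintro rfl; exact ha hi
  have hia' : i + 1 ≠ a := by rintro rfl; exact h₂ (mem_insert_self _ _)
  exact ⟨(hL.mem_erase_iff).2 ⟨hia, h₀⟩, (hL.mem_erase_iff).2 ⟨hia', h₁⟩,
    fun h => h₂ (mem_insert_of_mem h)⟩

theorem card_perms_filter_forall_infix {L : List ℕ} (hL : L.Nodup) {S : Finset ℕ}
    (hS : S ∈ pathMatchings L) :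
    #{w ∈ L.permutations.toFinset | ∀ i ∈ S, [i + 1, i] <:+: w} =
      (L.length - S.card).factorial := by
  induction S using Finset.induction_on generalizing L with
  | empty =>
    simp [List.toFinset_card_of_nodup (List.nodup_permutations L hL), List.length_permutations]
  | @insert a S ha ih =>
    obtain ⟨haL, ha₁L, ha₁⟩ := mem_pathMatchings.1 hS a (mem_insert_self a S)
    have hS' : ∀ i ∈ S, i ≠ a ∧ i + 1 ≠ a := fun i hi => by
      refine ⟨by rintro rfl; exact ha hi, ?_⟩
      rintro rfl
      exact (mem_pathMatchings.1 hS i (mem_insert_of_mem hi)).2.2 (mem_insert_self _ _)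
    rw [card_insert_of_notMem ha, show L.length - (#S + 1) = L.length - 1 - #S by omega,
      ← List.length_erase_of_mem haL, ← ih (hL.erase a) (mem_pathMatchings_erase hL hS ha)]
    refine card_bij' (fun w _ => w.erase a) (fun u _ => List.insertAfter (a + 1) a u)
      (fun w hw => ?_) (fun u hu => ?_) (fun w hw => ?_) (fun u hu => ?_) <;>
      simp only [mem_filter, List.mem_toFinset, List.mem_permutations, forall_mem_insert] at *
    · exact ⟨hw.1.erase a, fun i hi => (hw.2.2 i hi).pair_erase (hS' i hi).2 (hS' i hi).1⟩
    · have ha₁u : a + 1 ∈ u := hu.1.symm.subset ((hL.mem_erase_iff).2 ⟨by omega, ha₁L⟩)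
      refine ⟨(List.perm_insertAfter ha₁u).trans
        ((hu.1.cons a).trans (List.perm_cons_erase haL).symm),
        List.pair_infix_insertAfter ha₁u, fun i hi => (hu.2 i hi).pair_insertAfter ?_⟩
      have := (hS' i hi).1
      omega
    · exact (hw.1.nodup_iff.2 hL).insertAfter_erase hw.2.1
    · exact List.erase_insertAfter fun h => hL.not_mem_erase (hu.1.subset h)

open scoped Classical in
theorem card_filter_salient {L : List ℕ} (hL : L.Nodup) :
    (#{w ∈ L.permutations.toFinset | Salient w} : ℤ) =
      ∑ S ∈ pathMatchings L, (-1 : ℤ) ^ S.card * (L.length - S.card).factorial := by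
  calc (#{w ∈ L.permutations.toFinset | Salient w} : ℤ)
      = ∑ w ∈ L.permutations.toFinset, ∑ T ∈ (occurrences w).powerset, (-1 : ℤ) ^ T.card := by
        rw [natCast_card_filter]
        exact sum_congr rfl fun w _ => by
          rw [sum_powerset_neg_one_pow_card]
          exact if_congr (salient_iff_occurrences_eq_empty w) rfl rfl
    _ = ∑ x ∈ markedPerms L, (-1 : ℤ) ^ x.2.card := by rw [markedPerms, sum_sigma]
    _ = ∑ x ∈ markedPerms L with ¬∃ i, IsDefect x.2 i, (-1 : ℤ) ^ x.2.card := by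
        rw [← sum_filter_add_sum_filter_not _ (fun x => ∃ i, IsDefect x.2 i),
          sum_filter_exists_isDefect hL, zero_add]
    _ = ∑ w ∈ L.permutations.toFinset,
          ∑ S ∈ pathMatchings L with ∀ i ∈ S, [i + 1, i] <:+: w, (-1 : ℤ) ^ S.card := by
        rw [markedPerms, filter_sigma, sum_sigma]
        exact sum_congr rfl fun w hw => sum_powerset_filter_not_exists_isDefect
          (List.mem_permutations.1 (List.mem_toFinset.1 hw))
    _ = ∑ S ∈ pathMatchings L,
          ∑ w ∈ L.permutations.toFinset with ∀ i ∈ S, [i + 1, i] <:+: w, (-1 : ℤ) ^ S.card :=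
        sum_comm' fun w S => by simp only [mem_filter]; tauto
    _ = _ := sum_congr rfl fun S hS => by
        rw [sum_const, card_perms_filter_forall_infix hL hS, nsmul_eq_mul, mul_comm]

theorem mem_pathMatchings_range' {a n : ℕ} {S : Finset ℕ} :
    S ∈ pathMatchings (List.range' a n) ↔ ∀ i ∈ S, a ≤ i ∧ i + 2 ≤ a + n ∧ i + 1 ∉ S := by
  simp only [mem_pathMatchings, List.mem_range'_1]
  exact forall₂_congr fun i _ =>
    ⟨fun h => ⟨h.1.1, by omega, h.2.2⟩, fun h => ⟨⟨h.1, by omega⟩, ⟨by omega, by omega⟩, h.2.2⟩⟩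

theorem filter_pathMatchings_range'_notMem (a n j : ℕ) :
    {S ∈ pathMatchings (List.range' a (n + 2)) | S.card = j ∧ a + n ∉ S} =
      {S ∈ pathMatchings (List.range' a (n + 1)) | S.card = j} := by
  ext S
  simp only [mem_filter, mem_pathMatchings_range']
  refine ⟨fun ⟨h, hj, hn⟩ => ⟨fun i hi => ?_, hj⟩,
    fun ⟨h, hj⟩ => ⟨fun i hi => ?_, hj, fun hn => ?_⟩⟩
  · have : i ≠ a + n := by rintro rfl; exact hn hi
    have := h i hi
    exact ⟨this.1, by omega, this.2.2⟩
  · have := h i hi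
    exact ⟨this.1, by omega, this.2.2⟩
  · have := h _ hn
    omega

theorem card_filter_pathMatchings_range'_mem (a n j : ℕ) :
    #{S ∈ pathMatchings (List.range' a (n + 2)) | S.card = j + 1 ∧ a + n ∈ S} =
      #{S ∈ pathMatchings (List.range' a n) | S.card = j} := by
  refine card_bij' (fun S _ => S.erase (a + n)) (fun S _ => insert (a + n) S)
    (fun S hS => ?_) (fun S hS => ?_) (fun S hS => insert_erase (mem_filter.1 hS).2.2)
    (fun S hS => erase_insert fun h => ?_) <;>
    simp only [mem_filter, mem_pathMatchings_range'] at hS ⊢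
  · obtain ⟨h, hj, hn⟩ := hS
    refine ⟨fun i hi => ?_, by rw [card_erase_of_mem hn, hj, Nat.add_sub_cancel]⟩
    obtain ⟨hin, hiS⟩ := mem_erase.1 hi
    obtain ⟨h₁, h₂, h₃⟩ := h i hiS
    have : i + 1 ≠ a + n := by rintro h; exact h₃ (h ▸ hn)
    exact ⟨h₁, by omega, fun h => h₃ (mem_of_mem_erase h)⟩
  · have hn : a + n ∉ S := fun hn => by have := (hS.1 _ hn).2.1; omega
    refine ⟨fun i hi => ?_, by rw [card_insert_of_notMem hn, hS.2], mem_insert_self _ _⟩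
    rcases mem_insert.1 hi with rfl | hi
    · refine ⟨by omega, by omega, fun h => ?_⟩
      rcases mem_insert.1 h with h | h
      · omega
      · have := (hS.1 _ h).2.1; omega
    · obtain ⟨h₁, h₂, h₃⟩ := hS.1 i hi
      exact ⟨h₁, by omega, fun h => (mem_insert.1 h).elim (by omega) h₃⟩
  · have := (hS.1 _ h).2.1
    omega

theorem card_filter_pathMatchings_range' (a : ℕ) :
    ∀ n j, #{S ∈ pathMatchings (List.range' a n) | S.card = j} = (n - j).choose j
  | n, 0 => by
    have : {S ∈ pathMatchings (List.range' a n) | S.card = 0} = {∅} := by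
      ext S
      simp only [mem_filter, card_eq_zero, mem_singleton, and_iff_right_iff_imp]
      rintro rfl
      simp [mem_pathMatchings]
    rw [this, card_singleton, Nat.choose_zero_right]
  | 0, j + 1 | 1, j + 1 => by
    rw [card_eq_zero.2 (filter_eq_empty_iff.2 fun S hS hc => ?_)]
    · simp
    obtain ⟨i, hi⟩ := card_pos.1 (by omega : 0 < S.card)
    have := mem_pathMatchings_range'.1 hS i hi
    omega
  | n + 2, j + 1 => by
    rw [← card_filter_add_card_filter_not (fun S => a + n ∈ S), filter_filter, filter_filter,
      card_filter_pathMatchings_range'_mem, filter_pathMatchings_range'_notMem,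
      card_filter_pathMatchings_range' a n j, card_filter_pathMatchings_range' a (n + 1) (j + 1)]
    rcases le_or_gt j n with h | h
    · rw [show n + 2 - (j + 1) = n - j + 1 by omega, show n + 1 - (j + 1) = n - j by omega,
        Nat.choose_succ_succ']
    · simp [show n - j = 0 by omega, show n + 1 - (j + 1) = 0 by omega,
        show n + 2 - (j + 1) = 0 by omega, Nat.choose_eq_zero_of_lt (show 0 < j by omega)]

theorem sum_pathMatchings_range' (a n : ℕ) :
    ∑ S ∈ pathMatchings (List.range' a n), (-1 : ℤ) ^ S.card * (n - S.card).factorial =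
      ∑ j ∈ range (n / 2 + 1), (-1 : ℤ) ^ j * (n - j).factorial * (n - j).choose j := by
  have hmaps : ∀ S ∈ pathMatchings (List.range' a n), S.card ∈ range (n + 1) := fun S hS => by
    have := card_le_card (mem_powerset.1 (mem_filter.1 hS).1)
    have := (List.range' a n).toFinset_card_le
    rw [List.length_range'] at this
    rw [mem_range]
    omega
  rw [← sum_fiberwise_of_maps_to hmaps]
  calc _ = ∑ j ∈ range (n + 1), (-1 : ℤ) ^ j * (n - j).factorial * (n - j).choose j :=
        sum_congr rfl fun j _ => by
          rw [sum_congr rfl fun S hS => by rw [(mem_filter.1 hS).2], sum_const,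
            card_filter_pathMatchings_range', nsmul_eq_mul]
          ring
    _ = _ := by
        refine (sum_subset (range_subset_range.2 (by omega)) fun j _ hj => ?_).symm
        rw [Nat.choose_eq_zero_of_lt (by rw [mem_range] at hj; omega), Nat.cast_zero, mul_zero]

end SalientPermutation

/-- The number of salient permutations in `Sₙ` equals
`∑_{j=0}^{⌊n/2⌋} (-1)^j (n-j)! C(n-j, j)`; consequently, so does the number of
permutations of `1,…,n` that contain no factor (consecutive entries) `i+1, i`
and no factor `i+2, i, i+1`. -/
theorem stmt4 (n : ℕ) :
    (Set.ncard {w : List ℕ | w.Perm (List.range' 1 n) ∧ Salient w} : ℤ) =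
      (∑ j ∈ Finset.range (n / 2 + 1),
        (-1 : ℤ) ^ j * (n - j).factorial * Nat.choose (n - j) j) ∧
    (Set.ncard {w : List ℕ | w.Perm (List.range' 1 n) ∧ ∀ i : ℕ,
        (¬ ∃ p q : List ℕ, w = p ++ (i + 1) :: i :: q) ∧
        (¬ ∃ p q : List ℕ, w = p ++ (i + 2) :: i :: (i + 1) :: q)} : ℤ) =
      ∑ j ∈ Finset.range (n / 2 + 1),
        (-1 : ℤ) ^ j * (n - j).factorial * Nat.choose (n - j) j := by
  classical
  have hset : {w : List ℕ | w.Perm (List.range' 1 n) ∧ Salient w} =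
      ↑{w ∈ (List.range' 1 n).permutations.toFinset | Salient w} := by
    ext w
    simp
  have h := SalientPermutation.card_filter_salient (List.nodup_range' (s := 1) (n := n))
  rw [List.length_range', SalientPermutation.sum_pathMatchings_range', ← Set.ncard_coe_finset,
    ← hset] at h
  exact ⟨h, by simpa only [SalientPermutation.salient_iff] using h⟩
end

section
/- Let R be a finite graded poset of rank n with 0̂ and 1̂, let 1 ≤ i ≤ n−1, and let R[i] be the stretching of R at rank i: for each element t of R of rank i adjoin a new element t′ > t with t′ < u whenever t < u in R (and no other relations not implied by these), so R[i] has rank n+1. For S ⊆ [n], define S° as follows: if not both i and i+1 lie in S, replace each j ∈ S with j ≥ i+1 by j−1; if both i and i+1 lie in S, remove i+1 and replace each j ∈ S with j > i+1 by j−1. Then β_{R[i]}(S) = β_R(S°) if not both i, i+1 ∈ S, and β_{R[i]}(S) = −β_R(S°) if both i, i+1 ∈ S. Consequently, if β_R is multiplicity-free then so is β_{R[i]}. -/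
/-- The flag f-vector: `flagF P ρ S` is the number of chains of `P` whose set of
ranks (values of `ρ`) is exactly `S`. -/
noncomputable def flagF (P : Type*) [PartialOrder P] (ρ : P → ℕ) (S : Finset ℕ) : ℕ :=
  Set.ncard {C : Finset P | IsChain (· ≤ ·) (C : Set P) ∧ C.image ρ = S}

/-- The flag h-vector: `flagH P ρ S = ∑_{T ⊆ S} (-1)^{#(S∖T)} flagF P ρ T`. -/
noncomputable def flagH (P : Type*) [PartialOrder P] (ρ : P → ℕ) (S : Finset ℕ) : ℤ :=
  ∑ T ∈ S.powerset, (-1 : ℤ) ^ (S.card - T.card) * (flagF P ρ T : ℤ)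

/-- The operation `S ↦ S°` of the stretching construction: if not both `i` and
`i+1` lie in `S`, replace every `j ∈ S` with `j ≥ i+1` by `j-1`; if both do,
remove `i+1` and replace every `j ∈ S` with `j > i+1` by `j-1`. -/
def contractAt (i : ℕ) (S : Finset ℕ) : Finset ℕ :=
  if i ∈ S ∧ i + 1 ∈ S then
    (S.erase (i + 1)).image (fun j => if i + 1 < j then j - 1 else j)
  else
    S.image (fun j => if i + 1 ≤ j then j - 1 else j)

/-!
Write `σ = contractRank i` for the map on ranks that merges `i` and `i + 1`. Since `ρ` goes up by
one along covers of the finite poset `R`, it is strictly monotone. The projection `R[i] → R`,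
`t′ ↦ t`, together with the rank function identifies `R[i]` with the pairs `(a, j)` such that
`ρ a = σ j`; it is monotone and reflects comparability. Hence taking images is a bijection from
the chains of `R[i]` with rank set `T` onto the chains of `R` with rank set `σ T`, so
`α_{R[i]}(T) = α_R(σ T)`. In the alternating sum defining `β_{R[i]}(S)`, `σ` is injective on `S`
unless both `i, i + 1 ∈ S`. In that case, for `B ⊆ S \ {i, i + 1}`, the sets `B ∪ {i}`,
`B ∪ {i + 1}` and `B ∪ {i, i + 1}` all have image `σ B ∪ {i}`, and the four terms indexed by
`B` and these sets add up to minus the two terms of `β_R(σ S)` indexed by `σ B` and `σ B ∪ {i}`.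
-/

open Finset

def chainsWithRanks (P : Type*) [PartialOrder P] (ρ : P → ℕ) (S : Finset ℕ) : Set (Finset P) :=
  {C | IsChain (· ≤ ·) (C : Set P) ∧ C.image ρ = S}

section RankFibration

variable {P Q : Type*} [PartialOrder P] [PartialOrder Q] [DecidableEq Q]
  {ρP : P → ℕ} {ρQ : Q → ℕ} {f : P → Q} {σ : ℕ → ℕ}

theorem mapsTo_image_chainsWithRanks (hf : Monotone f) (hrank : ∀ x, ρQ (f x) = σ (ρP x))
    (T : Finset ℕ) :
    Set.MapsTo (image f) (chainsWithRanks P ρP T) (chainsWithRanks Q ρQ (T.image σ)) := by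
  rintro C ⟨hC, rfl⟩
  refine ⟨?_, ?_⟩
  · rw [coe_image]
    exact hC.image_of_map_rel _ _ f fun _ _ h => hf h
  · simp only [image_image]
    exact image_congr fun x _ => hrank x

theorem mem_of_mem_image_of_rank_mem (hf : Monotone f) (hrank : ∀ x, ρQ (f x) = σ (ρP x))
    (hinj : ∀ x y, f x = f y → ρP x = ρP y → x = y) (hρQ : StrictMono ρQ)
    {T : Finset ℕ} {C : Finset P} (hC : C ∈ chainsWithRanks P ρP T) {x : P}
    (hx : f x ∈ C.image f) (hxT : ρP x ∈ T) : x ∈ C := by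
  obtain ⟨hC, rfl⟩ := hC
  obtain ⟨y, hy, hyx⟩ := mem_image.1 hx
  obtain ⟨z, hz, hzx⟩ := mem_image.1 hxT
  have hρzy : ρQ (f z) = ρQ (f y) := by rw [hrank, hrank, hzx, ← hrank, ← hrank, hyx]
  have hzy : f z = f y := by
    rcases hC.total hz hy with h | h
    · exact (hf h).eq_of_not_lt fun hlt => (hρQ hlt).ne hρzy
    · exact ((hf h).eq_of_not_lt fun hlt => (hρQ hlt).ne hρzy.symm).symm
  rwa [← hinj z x (hzy.trans hyx) hzx]

theorem injOn_image_chainsWithRanks (hf : Monotone f) (hrank : ∀ x, ρQ (f x) = σ (ρP x))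
    (hinj : ∀ x y, f x = f y → ρP x = ρP y → x = y) (hρQ : StrictMono ρQ) (T : Finset ℕ) :
    Set.InjOn (image f) (chainsWithRanks P ρP T) := by
  have hsub : ∀ C₁ ∈ chainsWithRanks P ρP T, ∀ C₂ ∈ chainsWithRanks P ρP T,
      C₁.image f = C₂.image f → C₁ ⊆ C₂ := fun C₁ h₁ C₂ h₂ heq x hx =>
    mem_of_mem_image_of_rank_mem hf hrank hinj hρQ h₂ (heq ▸ mem_image_of_mem f hx)
      (h₁.2 ▸ mem_image_of_mem ρP hx)
  exact fun C₁ h₁ C₂ h₂ heq => (hsub C₁ h₁ C₂ h₂ heq).antisymm (hsub C₂ h₂ C₁ h₁ heq.symm)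

theorem surjOn_image_chainsWithRanks [Finite P]
    (hlift : ∀ a j, ρQ a = σ j → ∃ x, f x = a ∧ ρP x = j)
    (hcomp : ∀ x y, f x ≤ f y → x ≤ y ∨ y ≤ x) (T : Finset ℕ) :
    Set.SurjOn (image f) (chainsWithRanks P ρP T) (chainsWithRanks Q ρQ (T.image σ)) := by
  rintro D ⟨hD, hDT⟩
  let C := (Set.toFinite {x | f x ∈ D ∧ ρP x ∈ T}).toFinset
  have hmemC : ∀ x, x ∈ C ↔ f x ∈ D ∧ ρP x ∈ T := fun x => Set.Finite.mem_toFinset _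
  refine ⟨C, ⟨fun x hx y hy _ => ?_, ?_⟩, ?_⟩
  · rcases hD.total ((hmemC x).1 hx).1 ((hmemC y).1 hy).1 with h | h
    · exact hcomp x y h
    · exact (hcomp y x h).symm
  · refine (image_subset_iff.2 fun x hx => ((hmemC x).1 hx).2).antisymm fun j hj => ?_
    obtain ⟨a, ha, haj⟩ := mem_image.1 (hDT ▸ mem_image_of_mem σ hj)
    obtain ⟨x, rfl, rfl⟩ := hlift a j haj
    exact mem_image_of_mem ρP ((hmemC x).2 ⟨ha, hj⟩)
  · refine (image_subset_iff.2 fun x hx => ((hmemC x).1 hx).1).antisymm fun a ha => ?_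
    obtain ⟨j, hj, hja⟩ := mem_image.1 (hDT ▸ mem_image_of_mem ρQ ha)
    obtain ⟨x, rfl, rfl⟩ := hlift a j hja.symm
    exact mem_image_of_mem f ((hmemC x).2 ⟨ha, hj⟩)

theorem flagF_eq_flagF_image [Finite P] (hf : Monotone f) (hrank : ∀ x, ρQ (f x) = σ (ρP x))
    (hinj : ∀ x y, f x = f y → ρP x = ρP y → x = y)
    (hlift : ∀ a j, ρQ a = σ j → ∃ x, f x = a ∧ ρP x = j)
    (hcomp : ∀ x y, f x ≤ f y → x ≤ y ∨ y ≤ x) (hρQ : StrictMono ρQ) (T : Finset ℕ) :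
    flagF P ρP T = flagF Q ρQ (T.image σ) :=
  Set.BijOn.ncard_eq ⟨mapsTo_image_chainsWithRanks hf hrank T,
    injOn_image_chainsWithRanks hf hrank hinj hρQ T, surjOn_image_chainsWithRanks hlift hcomp T⟩

end RankFibration

section FlagH

variable {P Q : Type*} [PartialOrder P] [PartialOrder Q] {ρP : P → ℕ} {ρQ : Q → ℕ} {σ : ℕ → ℕ}

theorem flagH_eq_flagH_image_of_injOn (hF : ∀ T, flagF P ρP T = flagF Q ρQ (T.image σ))
    {S : Finset ℕ} (hσ : Set.InjOn σ S) :
    flagH P ρP S = flagH Q ρQ (S.image σ) := by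
  unfold flagH
  rw [powerset_image, sum_image (image_injOn_powerset_of_injOn hσ), card_image_of_injOn hσ]
  refine sum_congr rfl fun T hT => ?_
  rw [hF, card_image_of_injOn (hσ.mono (mem_powerset.1 hT))]

theorem flagH_insert_insert_eq_neg (hF : ∀ T, flagF P ρP T = flagF Q ρQ (T.image σ))
    {s : Finset ℕ} {a b : ℕ} (has : a ∉ s) (hbs : b ∉ s) (hab : a ≠ b) (hσab : σ a = σ b)
    (hσ : Set.InjOn σ ((insert a s : Finset ℕ) : Set ℕ)) :
    flagH P ρP (insert a (insert b s)) = -flagH Q ρQ ((insert a (insert b s)).image σ) := by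
  have habs : a ∉ insert b s := by simp [hab, has]
  have hσs : Set.InjOn σ s := hσ.mono (subset_insert a s)
  have hσa : σ a ∉ s.image σ := fun h' => by
    obtain ⟨c, hc, hca⟩ := mem_image.1 h'
    exact has (hσ (mem_insert_of_mem hc) (mem_insert_self a s) hca ▸ hc)
  unfold flagH
  rw [image_insert, image_insert, ← hσab, insert_idem, sum_powerset_insert hσa, powerset_image,
    sum_image (image_injOn_powerset_of_injOn hσs), sum_image (image_injOn_powerset_of_injOn hσs),
    card_insert_of_notMem hσa, card_image_of_injOn hσs, sum_powerset_insert habs,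
    sum_powerset_insert hbs, sum_powerset_insert hbs, card_insert_of_notMem habs,
    card_insert_of_notMem hbs, ← sum_add_distrib, ← sum_add_distrib, ← sum_add_distrib,
    ← sum_add_distrib, ← sum_neg_distrib]
  refine sum_congr rfl fun B hB => ?_
  have hBs := mem_powerset.1 hB
  have haB : a ∉ B := fun h' => has (hBs h')
  have hbB : b ∉ B := fun h' => hbs (hBs h')
  have hσaB : σ a ∉ B.image σ := fun h' => hσa (image_subset_image hBs h')
  obtain ⟨d, hd⟩ := Nat.exists_eq_add_of_le (card_le_card hBs)
  simp only [hF, image_insert, ← hσab, insert_idem, card_insert_of_notMem hσaB,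
    card_image_of_injOn (hσs.mono hBs), card_insert_of_notMem haB, card_insert_of_notMem hbB,
    card_insert_of_notMem (show a ∉ insert b B by simp [hab, haB]), hd]
  rw [show #B + d + 1 + 1 - #B = d + 2 by omega, show #B + d + 1 + 1 - (#B + 1) = d + 1 by omega,
    show #B + d + 1 + 1 - (#B + 1 + 1) = d by omega, show #B + d + 1 - #B = d + 1 by omega,
    show #B + d + 1 - (#B + 1) = d by omega]
  ring

theorem flagH_eq_neg_flagH_image_of_merge (hF : ∀ T, flagF P ρP T = flagF Q ρQ (T.image σ))
    {S : Finset ℕ} {a b : ℕ} (ha : a ∈ S) (hb : b ∈ S) (hab : a ≠ b) (hσab : σ a = σ b)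
    (hσ : Set.InjOn σ (S.erase b)) :
    flagH P ρP S = -flagH Q ρQ (S.image σ) := by
  set s := (S.erase b).erase a with hs
  have hSs : S.erase b = insert a s := (insert_erase (mem_erase.2 ⟨hab, ha⟩)).symm
  have hS : S = insert a (insert b s) := by
    rw [insert_comm, ← hSs, insert_erase hb]
  rw [hSs] at hσ
  rw [hS]
  exact flagH_insert_insert_eq_neg hF (by simp [hs]) (by simp [hs]) hab hσab hσ

end FlagH

def contractRank (i j : ℕ) : ℕ := if i + 1 ≤ j then j - 1 else j

theorem contractRank_injOn {i : ℕ} {S : Finset ℕ} (h : ¬(i ∈ S ∧ i + 1 ∈ S)) :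
    Set.InjOn (contractRank i) S := by
  intro a ha b hb hab
  simp only [contractRank] at hab
  split_ifs at hab
  · omega
  · obtain ⟨rfl, rfl⟩ : a = i + 1 ∧ b = i := by omega
    exact (h ⟨hb, ha⟩).elim
  · obtain ⟨rfl, rfl⟩ : a = i ∧ b = i + 1 := by omega
    exact (h ⟨ha, hb⟩).elim
  · exact hab

theorem contractAt_eq_image (i : ℕ) (S : Finset ℕ) :
    contractAt i S = S.image (contractRank i) := by
  unfold contractAt
  split_ifs with h
  · have hσ : Set.EqOn (fun j => if i + 1 < j then j - 1 else j) (contractRank i)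
        (S.erase (i + 1) : Set ℕ) := by
      intro j hj
      simp only [coe_erase, Set.mem_sdiff, Set.mem_singleton_iff] at hj
      simp only [contractRank]
      split_ifs <;> omega
    rw [image_congr hσ]
    refine (image_subset_image (erase_subset _ _)).antisymm fun j hj => ?_
    obtain ⟨k, hk, rfl⟩ := mem_image.1 hj
    by_cases hki : k = i + 1
    · exact mem_image.2 ⟨i, mem_erase.2 ⟨by omega, h.1⟩, by simp [contractRank, hki]⟩
    · exact mem_image_of_mem _ (mem_erase.2 ⟨hki, hk⟩)
  · rfl

theorem contractAt_subset_Icc {n i : ℕ} (hi1 : 1 ≤ i) (hi2 : i ≤ n - 1) {S : Finset ℕ}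
    (hS : S ⊆ Icc 1 n) : contractAt i S ⊆ Icc 1 (n - 1) := by
  rw [contractAt_eq_image, image_subset_iff]
  intro j hj
  have := mem_Icc.1 (hS hj)
  simp only [mem_Icc, contractRank]
  split_ifs <;> omega

/-- `R'` is the stretching `R[i]` presented through `e`: `e (.inr t)` is the new element `t′`. -/
structure IsStretching {R R' : Type*} [PartialOrder R] [PartialOrder R'] (ρ : R → ℕ) (i : ℕ)
    (ρ' : R' → ℕ) (e : R ⊕ {t : R // ρ t = i} ≃ R') : Prop where
  inl_le_inl : ∀ a b : R, e (.inl a) ≤ e (.inl b) ↔ a ≤ b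
  inl_le_inr : ∀ a t, e (.inl a) ≤ e (.inr t) ↔ a ≤ t.1
  inr_le_inl : ∀ t a, e (.inr t) ≤ e (.inl a) ↔ t.1 < a
  inr_le_inr : ∀ t s, e (.inr t) ≤ e (.inr s) ↔ t = s
  rank_inl : ∀ a, ρ' (e (.inl a)) = if ρ a ≤ i then ρ a else ρ a + 1
  rank_inr : ∀ t, ρ' (e (.inr t)) = i + 1

section Stretching

variable {R R' : Type*} {ρ : R → ℕ} {i : ℕ}

def stretchProj (e : R ⊕ {t : R // ρ t = i} ≃ R') (x : R') : R :=
  Sum.elim id Subtype.val (e.symm x)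

@[simp]
theorem stretchProj_inl (e : R ⊕ {t : R // ρ t = i} ≃ R') (a : R) :
    stretchProj e (e (.inl a)) = a := by
  simp [stretchProj]

@[simp]
theorem stretchProj_inr (e : R ⊕ {t : R // ρ t = i} ≃ R') (t : {t : R // ρ t = i}) :
    stretchProj e (e (.inr t)) = t.1 := by
  simp [stretchProj]

variable [PartialOrder R] [PartialOrder R'] {ρ' : R' → ℕ} {e : R ⊕ {t : R // ρ t = i} ≃ R'}

namespace IsStretching

theorem monotone_proj (h : IsStretching ρ i ρ' e) : Monotone (stretchProj e) := by
  intro x y hxy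
  obtain ⟨a | t, rfl⟩ := e.surjective x <;> obtain ⟨b | s, rfl⟩ := e.surjective y
  · simpa using (h.inl_le_inl a b).1 hxy
  · simpa using (h.inl_le_inr a s).1 hxy
  · simpa using ((h.inr_le_inl t b).1 hxy).le
  · simp [(h.inr_le_inr t s).1 hxy]

theorem rank_proj (h : IsStretching ρ i ρ' e) (x : R') :
    ρ (stretchProj e x) = contractRank i (ρ' x) := by
  obtain ⟨a | t, rfl⟩ := e.surjective x
  · rw [stretchProj_inl, h.rank_inl, contractRank]
    split_ifs <;> omega
  · rw [stretchProj_inr, h.rank_inr, t.2, contractRank, if_pos le_rfl, Nat.add_sub_cancel]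

theorem eq_of_proj_eq_of_rank_eq (h : IsStretching ρ i ρ' e) {x y : R'}
    (hproj : stretchProj e x = stretchProj e y) (hrank : ρ' x = ρ' y) : x = y := by
  obtain ⟨a | t, rfl⟩ := e.surjective x <;> obtain ⟨b | s, rfl⟩ := e.surjective y <;>
    simp only [stretchProj_inl, stretchProj_inr, h.rank_inl, h.rank_inr] at hproj hrank
  · rw [hproj]
  · subst hproj; rw [s.2] at hrank; simp at hrank
  · subst hproj; rw [t.2] at hrank; simp at hrank
  · rw [Subtype.ext hproj]

theorem exists_lift (h : IsStretching ρ i ρ' e) {a : R} {j : ℕ} (haj : ρ a = contractRank i j) :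
    ∃ x, stretchProj e x = a ∧ ρ' x = j := by
  by_cases hj : j = i + 1
  · subst hj
    rw [contractRank, if_pos le_rfl, Nat.add_sub_cancel] at haj
    exact ⟨e (.inr ⟨a, haj⟩), stretchProj_inr e _, h.rank_inr _⟩
  · refine ⟨e (.inl a), stretchProj_inl e a, ?_⟩
    rw [h.rank_inl, haj, contractRank]
    split_ifs <;> omega

theorem le_or_le_of_proj_le (h : IsStretching ρ i ρ' e) (hρ : StrictMono ρ) {x y : R'}
    (hxy : stretchProj e x ≤ stretchProj e y) : x ≤ y ∨ y ≤ x := by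
  obtain ⟨a | t, rfl⟩ := e.surjective x <;> obtain ⟨b | s, rfl⟩ := e.surjective y <;>
    simp only [stretchProj_inl, stretchProj_inr] at hxy
  · exact .inl ((h.inl_le_inl a b).2 hxy)
  · exact .inl ((h.inl_le_inr a s).2 hxy)
  · rcases hxy.eq_or_lt with hts | hts
    · exact .inr ((h.inl_le_inr b t).2 hts.ge)
    · exact .inl ((h.inr_le_inl t b).2 hts)
  · have hts : t = s := Subtype.ext (hxy.eq_of_not_lt fun hlt => (hρ hlt).ne (t.2.trans s.2.symm))
    exact .inl ((h.inr_le_inr t s).2 hts)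

theorem flagF_eq [Finite R] (h : IsStretching ρ i ρ' e) (hρ : StrictMono ρ) (T : Finset ℕ) :
    flagF R' ρ' T = flagF R ρ (contractAt i T) := by
  classical
  have : Finite R' := .of_equiv _ e
  rw [contractAt_eq_image]
  exact flagF_eq_flagF_image h.monotone_proj h.rank_proj (fun _ _ => h.eq_of_proj_eq_of_rank_eq)
    (fun _ _ => h.exists_lift) (fun _ _ => h.le_or_le_of_proj_le hρ) hρ T

theorem flagH_eq [Finite R] (h : IsStretching ρ i ρ' e) (hρ : StrictMono ρ) (S : Finset ℕ) :
    flagH R' ρ' S = (if i ∈ S ∧ i + 1 ∈ S then -1 else 1) * flagH R ρ (contractAt i S) := by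
  have hF (T : Finset ℕ) : flagF R' ρ' T = flagF R ρ (T.image (contractRank i)) := by
    rw [h.flagF_eq hρ, contractAt_eq_image]
  rw [contractAt_eq_image]
  split_ifs with hS
  · rw [flagH_eq_neg_flagH_image_of_merge hF hS.1 hS.2 (by omega)
      (by simp [contractRank]) (contractRank_injOn (by simp)), neg_one_mul]
  · rw [flagH_eq_flagH_image_of_injOn hF (contractRank_injOn hS), one_mul]

end IsStretching

end Stretching

theorem stmt18_general (R : Type*) [Fintype R] [PartialOrder R]
    (n : ℕ) (ρ : R → ℕ)
    (hcov : ∀ a b : R, a ⋖ b → ρ b = ρ a + 1)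
    (i : ℕ) (hi1 : 1 ≤ i) (hi2 : i ≤ n - 1)
    (R' : Type*) [PartialOrder R'] (ρ' : R' → ℕ)
    (e : R ⊕ {t : R // ρ t = i} ≃ R')
    (hle₁ : ∀ a b : R, e (Sum.inl a) ≤ e (Sum.inl b) ↔ a ≤ b)
    (hle₂ : ∀ (a : R) (t : {t : R // ρ t = i}),
      e (Sum.inl a) ≤ e (Sum.inr t) ↔ a ≤ t.1)
    (hle₃ : ∀ (t : {t : R // ρ t = i}) (a : R),
      e (Sum.inr t) ≤ e (Sum.inl a) ↔ t.1 < a)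
    (hle₄ : ∀ t s : {t : R // ρ t = i}, e (Sum.inr t) ≤ e (Sum.inr s) ↔ t = s)
    (hρ'₁ : ∀ a : R, ρ' (e (Sum.inl a)) = if ρ a ≤ i then ρ a else ρ a + 1)
    (hρ'₂ : ∀ t : {t : R // ρ t = i}, ρ' (e (Sum.inr t)) = i + 1) :
    (∀ S ⊆ Finset.Icc 1 n,
      flagH R' ρ' S =
        (if i ∈ S ∧ i + 1 ∈ S then -1 else 1) * flagH R ρ (contractAt i S)) ∧
    ((∀ S ⊆ Finset.Icc 1 (n - 1), flagH R ρ S = 0 ∨ flagH R ρ S = 1 ∨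
        flagH R ρ S = -1) →
      ∀ S ⊆ Finset.Icc 1 n, flagH R' ρ' S = 0 ∨ flagH R' ρ' S = 1 ∨
        flagH R' ρ' S = -1) := by
  have hρ : StrictMono ρ := by
    have := LocallyFiniteOrder.ofFiniteIcc fun a b : R => Set.toFinite (Set.Icc a b)
    exact (strictMono_iff_forall_covBy ρ).2 fun a b hab => (hcov a b hab).symm ▸ Nat.lt_succ_self _
  have hstretch : IsStretching ρ i ρ' e := ⟨hle₁, hle₂, hle₃, hle₄, hρ'₁, hρ'₂⟩
  refine ⟨fun S _ => hstretch.flagH_eq hρ S, fun hfree S hS => ?_⟩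
  rw [hstretch.flagH_eq hρ S]
  rcases hfree _ (contractAt_subset_Icc hi1 hi2 hS) with h | h | h <;> rw [h] <;> split_ifs <;> simp

/-- Let `R` be a finite graded poset of rank `n` with `0̂` and `1̂`, let
`1 ≤ i ≤ n-1`, and let `R'` (with rank function `ρ'`) be the stretching `R[i]` of
`R` at rank `i`: for each `t` of rank `i` a new element `t'` is adjoined with
`t' > t` and `t' < u` whenever `t < u`, and with no other new relations (the order
on `R'` is pinned down by the four `↔` hypotheses below, through the bijection `e`
between `R ⊕ {t // ρ t = i}` and `R'`); new elements get rank `i+1` and old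
elements of rank `> i` are shifted up by one.  Then
`β_{R[i]}(S) = β_R(S°)` if not both `i, i+1 ∈ S`, and `β_{R[i]}(S) = -β_R(S°)` if
both `i, i+1 ∈ S`.  Consequently, if `β_R` is multiplicity-free then so is
`β_{R[i]}`. -/
theorem stmt18 (R : Type*) [Fintype R] [PartialOrder R] [BoundedOrder R]
    (n : ℕ) (ρ : R → ℕ) (hbot : ρ ⊥ = 0) (htop : ρ ⊤ = n)
    (hcov : ∀ a b : R, a ⋖ b → ρ b = ρ a + 1)
    (i : ℕ) (hi1 : 1 ≤ i) (hi2 : i ≤ n - 1)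
    (R' : Type*) [PartialOrder R'] (ρ' : R' → ℕ)
    (e : R ⊕ {t : R // ρ t = i} ≃ R')
    (hle₁ : ∀ a b : R, e (Sum.inl a) ≤ e (Sum.inl b) ↔ a ≤ b)
    (hle₂ : ∀ (a : R) (t : {t : R // ρ t = i}),
      e (Sum.inl a) ≤ e (Sum.inr t) ↔ a ≤ t.1)
    (hle₃ : ∀ (t : {t : R // ρ t = i}) (a : R),
      e (Sum.inr t) ≤ e (Sum.inl a) ↔ t.1 < a)
    (hle₄ : ∀ t s : {t : R // ρ t = i}, e (Sum.inr t) ≤ e (Sum.inr s) ↔ t = s)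
    (hρ'₁ : ∀ a : R, ρ' (e (Sum.inl a)) = if ρ a ≤ i then ρ a else ρ a + 1)
    (hρ'₂ : ∀ t : {t : R // ρ t = i}, ρ' (e (Sum.inr t)) = i + 1) :
    (∀ S ⊆ Finset.Icc 1 n,
      flagH R' ρ' S =
        (if i ∈ S ∧ i + 1 ∈ S then -1 else 1) * flagH R ρ (contractAt i S)) ∧
    ((∀ S ⊆ Finset.Icc 1 (n - 1), flagH R ρ S = 0 ∨ flagH R ρ S = 1 ∨
        flagH R ρ S = -1) →
      ∀ S ⊆ Finset.Icc 1 n, flagH R' ρ' S = 0 ∨ flagH R' ρ' S = 1 ∨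
        flagH R' ρ' S = -1) :=
  stmt18_general R n ρ hcov i hi1 hi2 R' ρ' e hle₁ hle₂ hle₃ hle₄ hρ'₁ hρ'₂
end
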